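/- arXiv:2604.03164 — 7 statements merged into one kernel-verified Lean document; each statement's English description precedes it below -/
import Mathlib

section
/- Campillo's criterion: Let R be a commutative ring, A a commutative R-algebra, K the total ring of fractions of A (the localization of A at its nonzerodivisors), and B an A-subalgebra of K. Let I_Δ be the ideal of B ⊗_R B generated by the elements a⊗1 − 1⊗a for a ∈ A. Let p ∈ A and let p_1,…,p_r, q_1,…,q_s be nonzerodivisors of A such that the fractions p/p_i (1 ≤ i ≤ r), p/q_j (1 ≤ j ≤ s) and (p_1⋯p_r)/(q_1⋯q_s), viewed as elements of K, all lie in B. Then the element w := p·(p_1⋯p_r)/(q_1⋯q_s) of K lies in B, and Δ(w) := w⊗1 − 1⊗w ∈ B ⊗_R B is integral over the ideal I_Δ; that is, there exist n ≥ 1 and elements c_1,…,c_n of B ⊗_R B with c_i ∈ I_Δ^i for each i such that Δ(w)^n + c_1·Δ(w)^{n−1} + ⋯ + c_n = 0. (Hence w belongs to the Lipschitz saturation A^s_B.) -/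
/-!
Write `Δ f = φ f - ψ f` for the two inclusions `φ, ψ : B → B ⊗[R] B`, let `u = ∏ P / ∏ Q ∈ B`
and `d = Δ u`. Since `Δ (p u) = φ p · d + ψ u · Δ p` and `Δ p ∈ I_Δ`, it suffices that
`y = φ p · d` is integral over `I_Δ`. With `aᵢ = p / Pᵢ`, telescoping `Δ (∏ P)` one factor at a
time shows that `φ p · φ (∏ a) · Δ (∏ P) · dʳ` is of the form `c₁ yʳ + ⋯ + c_{r+1}` with
`cᵢ ∈ I_Δⁱ`, and likewise for the `Q`'s. The relation `φ (∏ Q) · d = Δ (∏ P) - ψ u · Δ (∏ Q)`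
then writes `y ^ (r + s + 1)` as a combination of these two expressions.
-/

open scoped TensorProduct
open Finset

namespace Ideal

variable {S : Type*} [CommRing S] {I : Ideal S} {c g x y z : S} {i k n : ℕ}

/-- `x` is integral over `I` iff `x ^ n ∈ I.dependenceIdeal x n` for some `n ≥ 1`. -/
def dependenceIdeal (I : Ideal S) (x : S) (n : ℕ) : Ideal S :=
  ⨆ i ∈ Icc 1 n, I ^ i * span {x ^ (n - i)}

theorem pow_mul_span_le_dependenceIdeal (hi : 1 ≤ i) (hk : i + k = n) :
    I ^ i * span {x ^ k} ≤ I.dependenceIdeal x n := by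
  obtain rfl : k = n - i := by omega
  exact le_iSup₂_of_le (f := fun i _ => I ^ i * span {x ^ (n - i)}) i
    (mem_Icc.2 ⟨hi, by omega⟩) le_rfl

theorem mul_pow_mem_dependenceIdeal (hc : c ∈ I ^ i) (hi : 1 ≤ i) (hk : i + k = n) :
    c * x ^ k ∈ I.dependenceIdeal x n :=
  pow_mul_span_le_dependenceIdeal hi hk (mul_mem_mul hc (mem_span_singleton_self _))

theorem mul_dependenceIdeal_le : I * I.dependenceIdeal x n ≤ I.dependenceIdeal x (n + 1) := by
  simp only [dependenceIdeal, mul_iSup]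
  refine iSup₂_le fun i hi => ?_
  rw [← mul_assoc, ← pow_succ']
  exact pow_mul_span_le_dependenceIdeal (by omega) (by rw [mem_Icc] at hi; omega)

theorem span_singleton_mul_dependenceIdeal_le :
    span {x} * I.dependenceIdeal x n ≤ I.dependenceIdeal x (n + 1) := by
  simp only [dependenceIdeal, mul_iSup]
  refine iSup₂_le fun i hi => ?_
  rw [mul_left_comm, span_singleton_mul_span_singleton, ← pow_succ']
  rw [mem_Icc] at hi
  exact pow_mul_span_le_dependenceIdeal hi.1 (by omega)

theorem pow_mul_dependenceIdeal_le (k : ℕ) :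
    I ^ k * I.dependenceIdeal x n ≤ I.dependenceIdeal x (n + k) := by
  induction k with
  | zero => simp
  | succ k ih =>
    rw [pow_succ', mul_assoc, ← add_assoc]
    exact (mul_mono_right ih).trans mul_dependenceIdeal_le

theorem mul_mem_dependenceIdeal_succ (hg : g ∈ I) (hz : z ∈ I.dependenceIdeal x n) :
    g * z ∈ I.dependenceIdeal x (n + 1) :=
  mul_dependenceIdeal_le (mul_mem_mul hg hz)

theorem pow_mul_mem_dependenceIdeal (hz : z ∈ I.dependenceIdeal x n) (k : ℕ) :
    x ^ k * z ∈ I.dependenceIdeal x (n + k) := by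
  induction k with
  | zero => simpa
  | succ k ih =>
    rw [pow_succ', mul_assoc, ← add_assoc]
    exact span_singleton_mul_dependenceIdeal_le (mul_mem_mul (mem_span_singleton_self x) ih)

theorem sub_mul_mem_dependenceIdeal (hg : g ∈ I) (hz : z ∈ I.dependenceIdeal x n) :
    (x - g) * z ∈ I.dependenceIdeal x (n + 1) := by
  rw [sub_mul]
  exact sub_mem (by simpa using pow_mul_mem_dependenceIdeal hz 1) (mul_mem_dependenceIdeal_succ hg hz)

theorem pow_sub_pow_mem_dependenceIdeal (h : y - x ∈ I) :
    ∀ n, y ^ n - x ^ n ∈ I.dependenceIdeal x n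
  | 0 => by simp
  | n + 1 => by
    have ih := pow_sub_pow_mem_dependenceIdeal h n
    rw [show y ^ (n + 1) - x ^ (n + 1)
        = x * (y ^ n - x ^ n) + (y - x) * (y ^ n - x ^ n) + (y - x) * x ^ n by ring]
    refine add_mem (add_mem ?_ (mul_mem_dependenceIdeal_succ h ih)) ?_
    · simpa using pow_mul_mem_dependenceIdeal ih 1
    · exact mul_pow_mem_dependenceIdeal (by rwa [pow_one]) le_rfl (add_comm 1 n)

theorem dependenceIdeal_le_of_sub_mem (h : y - x ∈ I) :
    I.dependenceIdeal y n ≤ I.dependenceIdeal x n := by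
  refine iSup₂_le fun i hi => ?_
  rw [mem_Icc] at hi
  have hy : y ^ (n - i) ∈ span {x ^ (n - i)} ⊔ I.dependenceIdeal x (n - i) :=
    add_sub_cancel (x ^ (n - i)) (y ^ (n - i)) ▸
      Submodule.add_mem_sup (mem_span_singleton_self _) (pow_sub_pow_mem_dependenceIdeal h _)
  calc I ^ i * span {y ^ (n - i)}
      ≤ I ^ i * (span {x ^ (n - i)} ⊔ I.dependenceIdeal x (n - i)) :=
        mul_mono_right ((span_singleton_le_iff_mem _).2 hy)
    _ ≤ I.dependenceIdeal x n := by
        rw [mul_sup]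
        refine sup_le (pow_mul_span_le_dependenceIdeal hi.1 (by omega)) ?_
        simpa [Nat.sub_add_cancel hi.2] using pow_mul_dependenceIdeal_le (x := x) (n := n - i) i

theorem pow_mem_dependenceIdeal_of_sub_mem (h : y - x ∈ I) (hy : y ^ n ∈ I.dependenceIdeal y n) :
    x ^ n ∈ I.dependenceIdeal x n := by
  rw [← sub_sub_cancel (y ^ n) (x ^ n)]
  exact sub_mem (dependenceIdeal_le_of_sub_mem h hy) (pow_sub_pow_mem_dependenceIdeal h n)

theorem exists_pow_add_sum_eq_zero (hx : x ^ n ∈ I.dependenceIdeal x n) :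
    ∃ c : ℕ → S, (∀ i, 1 ≤ i → i ≤ n → c i ∈ I ^ i) ∧
      x ^ n + ∑ i ∈ Icc 1 n, c i * x ^ (n - i) = 0 := by
  obtain ⟨μ, hμ⟩ := (Submodule.mem_iSup_finset_iff_exists_sum _ _).1 hx
  choose c hc hcμ using fun i => mem_mul_span_singleton.1 (μ i).2
  refine ⟨fun i => -c i, fun i _ _ => neg_mem (hc i), ?_⟩
  simp only [neg_mul, sum_neg_distrib, hcμ, hμ, add_neg_cancel]

theorem mul_prod_sub_prod_mul_pow_mem_dependenceIdeal {ι : Type*} (s : Finset ι) {π d : S}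
    {C F G : ι → S} (hCF : ∀ i ∈ s, C i * F i = π) (hFG : ∀ i ∈ s, F i - G i ∈ I) :
    π * (∏ i ∈ s, C i) * ((∏ i ∈ s, F i) - ∏ i ∈ s, G i) * d ^ #s
      ∈ I.dependenceIdeal (π * d) (#s + 1) := by
  induction s using Finset.cons_induction with
  | empty => simp
  | cons a s _ ih =>
    have hCFs : (∏ i ∈ s, C i) * ∏ i ∈ s, F i = π ^ #s := by
      rw [← prod_mul_distrib, prod_congr rfl fun i hi => hCF i (mem_cons_of_mem hi), prod_const]
    have hCFa : C a * F a = π := hCF a (mem_cons_self a s)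
    have hFGa : C a * (F a - G a) ∈ I := mul_mem_left _ _ (hFG a (mem_cons_self a s))
    simp only [prod_cons, card_cons]
    rw [show π * (C a * ∏ i ∈ s, C i) * (F a * ∏ i ∈ s, F i - G a * ∏ i ∈ s, G i) * d ^ (#s + 1)
        = C a * (F a - G a) * (π * d) ^ (#s + 1)
          + (π * d - C a * (F a - G a) * d)
            * (π * (∏ i ∈ s, C i) * ((∏ i ∈ s, F i) - ∏ i ∈ s, G i) * d ^ #s) by
      linear_combination (C a * (F a - G a) * π * d ^ (#s + 1)) * hCFs
        + (π * (∏ i ∈ s, C i) * ((∏ i ∈ s, F i) - ∏ i ∈ s, G i) * d ^ (#s + 1)) * hCFa]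
    exact add_mem (mul_pow_mem_dependenceIdeal (by rwa [pow_one]) le_rfl (by ring))
      (sub_mul_mem_dependenceIdeal (mul_mem_right _ _ hFGa)
        (ih (fun i hi => hCF i (mem_cons_of_mem hi)) fun i hi => hFG i (mem_cons_of_mem hi)))

end Ideal

section RingHomPair

variable {B S : Type*} [CommRing B] [CommRing S] (φ ψ : B →+* S) {I : Ideal S}

theorem map_mul_map_sub_pow_eq {p u a b P Q : B} {m n : ℕ} (hbQ : b * Q = p ^ n)
    (hu : u * Q = P) (hab : p ^ m * b = u * p ^ n * a) :
    (φ p * (φ u - ψ u)) ^ (m + n + 1)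
      = φ u * ((φ p * (φ u - ψ u)) ^ n * (φ p * φ a * (φ P - ψ P) * (φ u - ψ u) ^ m))
        - ψ u * ((φ p * (φ u - ψ u)) ^ m * (φ p * φ b * (φ Q - ψ Q) * (φ u - ψ u) ^ n)) := by
  have h1 := congrArg φ hbQ
  have h2 := congrArg φ hu
  have h3 := congrArg ψ hu
  have h4 := congrArg φ hab
  simp only [map_mul, map_pow] at h1 h2 h3 h4
  simp only [mul_pow]
  linear_combination (φ p * (φ u - ψ u) ^ (m + n) * (φ P - ψ P)) * h4
    + (φ p ^ (m + 1) * φ b * (φ u - ψ u) ^ (m + n)) * (h2 - h3)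
    - (φ p ^ (m + 1) * (φ u - ψ u) ^ (m + n + 1)) * h1

theorem map_sub_map_pow_mem_dependenceIdeal {ι κ : Type*} (s : Finset ι) (t : Finset κ)
    {p u : B} {a P : ι → B} {b Q : κ → B}
    (haP : ∀ i ∈ s, a i * P i = p) (hbQ : ∀ j ∈ t, b j * Q j = p)
    (hu : u * ∏ j ∈ t, Q j = ∏ i ∈ s, P i) (hQ : ∏ j ∈ t, Q j ∈ nonZeroDivisors B)
    (hp : φ p - ψ p ∈ I) (hP : ∀ i ∈ s, φ (P i) - ψ (P i) ∈ I)
    (hQI : ∀ j ∈ t, φ (Q j) - ψ (Q j) ∈ I) :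
    (φ (p * u) - ψ (p * u)) ^ (#s + #t + 1)
      ∈ I.dependenceIdeal (φ (p * u) - ψ (p * u)) (#s + #t + 1) := by
  set d := φ u - ψ u
  have haPs : (∏ i ∈ s, a i) * ∏ i ∈ s, P i = p ^ #s := by
    rw [← prod_mul_distrib, prod_congr rfl haP, prod_const]
  have hbQt : (∏ j ∈ t, b j) * ∏ j ∈ t, Q j = p ^ #t := by
    rw [← prod_mul_distrib, prod_congr rfl hbQ, prod_const]
  have hab : p ^ #s * ∏ j ∈ t, b j = u * p ^ #t * ∏ i ∈ s, a i := by
    refine (mul_cancel_right_mem_nonZeroDivisors hQ).1 ?_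
    linear_combination p ^ #s * hbQt - p ^ #t * (∏ i ∈ s, a i) * hu - p ^ #t * haPs
  have hMP : φ p * φ (∏ i ∈ s, a i) * (φ (∏ i ∈ s, P i) - ψ (∏ i ∈ s, P i)) * d ^ #s
      ∈ I.dependenceIdeal (φ p * d) (#s + 1) := by
    simpa only [map_prod] using Ideal.mul_prod_sub_prod_mul_pow_mem_dependenceIdeal s (d := d)
      (fun i hi => by rw [← map_mul, haP i hi]) hP
  have hMQ : φ p * φ (∏ j ∈ t, b j) * (φ (∏ j ∈ t, Q j) - ψ (∏ j ∈ t, Q j)) * d ^ #t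
      ∈ I.dependenceIdeal (φ p * d) (#t + 1) := by
    simpa only [map_prod] using Ideal.mul_prod_sub_prod_mul_pow_mem_dependenceIdeal t (d := d)
      (fun j hj => by rw [← map_mul, hbQ j hj]) hQI
  refine Ideal.pow_mem_dependenceIdeal_of_sub_mem (y := φ p * d) ?_ ?_
  · rw [show φ p * d - (φ (p * u) - ψ (p * u)) = -(ψ u * (φ p - ψ p)) by
      simp only [d, map_mul]; ring]
    exact neg_mem (Ideal.mul_mem_left _ _ hp)
  · rw [map_mul_map_sub_pow_eq φ ψ hbQt hu hab]
    refine sub_mem (Ideal.mul_mem_left _ _ ?_) (Ideal.mul_mem_left _ _ ?_)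
    · simpa [add_right_comm] using Ideal.pow_mul_mem_dependenceIdeal hMP #t
    · simpa [add_comm, add_left_comm, add_assoc] using Ideal.pow_mul_mem_dependenceIdeal hMQ #s

end RingHomPair

theorem campillo_criterion_general
    (R A K : Type*) [CommRing R] [CommRing A] [CommRing K]
    [Algebra R A] [Algebra A K] [Algebra R K] [IsScalarTower R A K]
    [IsFractionRing A K]
    (B : Subalgebra A K)
    {r s : ℕ} (p : A) (P : Fin r → A) (Q : Fin s → A)
    (hQ : ∀ j, Q j ∈ nonZeroDivisors A)
    (hPB : ∀ i, ∃ x ∈ B, x * algebraMap A K (P i) = algebraMap A K p)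
    (hQB : ∀ j, ∃ x ∈ B, x * algebraMap A K (Q j) = algebraMap A K p)
    (hPQ : ∃ x ∈ B, x * algebraMap A K (∏ j, Q j) = algebraMap A K (∏ i, P i))
    (IΔ : Ideal (↥B ⊗[R] ↥B))
    (hIΔ : IΔ = Ideal.span {x : ↥B ⊗[R] ↥B |
        ∃ a : A, x = algebraMap A ↥B a ⊗ₜ[R] 1 - 1 ⊗ₜ[R] algebraMap A ↥B a}) :
    ∃ w : ↥B,
      (w : K) * algebraMap A K (∏ j, Q j) = algebraMap A K (p * ∏ i, P i) ∧
      ∃ n : ℕ, 1 ≤ n ∧ ∃ c : ℕ → (↥B ⊗[R] ↥B),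
        (∀ i, 1 ≤ i → i ≤ n → c i ∈ IΔ ^ i) ∧
        (w ⊗ₜ[R] 1 - 1 ⊗ₜ[R] w) ^ n +
            ∑ i ∈ Finset.Icc 1 n, c i * (w ⊗ₜ[R] 1 - 1 ⊗ₜ[R] w) ^ (n - i) = 0 := by
  obtain ⟨u, hu, huPQ⟩ := hPQ
  choose a ha haP using hPB
  choose b hb hbQ using hQB
  set w : B := algebraMap A B p * ⟨u, hu⟩
  have hΔ (t : A) : algebraMap A B t ⊗ₜ[R] 1 - 1 ⊗ₜ[R] algebraMap A B t ∈ IΔ :=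
    hIΔ ▸ Ideal.subset_span ⟨t, rfl⟩
  have hQB : ∏ j, algebraMap A B (Q j) ∈ nonZeroDivisors B := by
    rw [← map_prod]
    exact mem_nonZeroDivisors_of_injective (f := B.val) Subtype.val_injective
      (IsLocalization.map_units K ⟨∏ j, Q j, prod_mem fun j _ => hQ j⟩).mem_nonZeroDivisors
  have hw := map_sub_map_pow_mem_dependenceIdeal (I := IΔ)
    (Algebra.TensorProduct.includeLeft (R := R) (S := R) (A := B) (B := B)).toRingHom
    (Algebra.TensorProduct.includeRight (R := R) (A := B) (B := B)).toRingHom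
    univ univ (u := ⟨u, hu⟩) (a := fun i => ⟨a i, ha i⟩) (b := fun j => ⟨b j, hb j⟩)
    (fun i _ => Subtype.ext (haP i)) (fun j _ => Subtype.ext (hbQ j))
    (Subtype.ext (by simpa [← map_prod] using huPQ)) hQB
    (hΔ p) (fun i _ => hΔ (P i)) (fun j _ => hΔ (Q j))
  rw [card_fin, card_fin] at hw
  refine ⟨w, ?_, r + s + 1, Nat.le_add_left 1 _, Ideal.exists_pow_add_sum_eq_zero hw⟩
  rw [map_mul, ← huPQ, ← mul_assoc]
  rfl

/-- **Campillo's criterion.**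
Let `A` be a commutative `R`-algebra, `K` its total ring of fractions, and `B` an
`A`-subalgebra of `K`.  Let `I_Δ ⊆ B ⊗[R] B` be the ideal generated by the elements
`a ⊗ 1 − 1 ⊗ a` for `a ∈ A`.  Given `p ∈ A` and nonzerodivisors
`P 1, …, P r, Q 1, …, Q s` of `A` such that the fractions `p / P i`, `p / Q j` and
`(P 1 ⋯ P r) / (Q 1 ⋯ Q s)` all lie in `B`, the element
`w := p (P 1 ⋯ P r) / (Q 1 ⋯ Q s)` lies in `B` and `Δ(w) := w ⊗ 1 − 1 ⊗ w` is
integral over the ideal `I_Δ`; hence `w` belongs to the Lipschitz saturation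
`A^s_B`. -/
theorem campillo_criterion
    (R A K : Type*) [CommRing R] [CommRing A] [CommRing K]
    [Algebra R A] [Algebra A K] [Algebra R K] [IsScalarTower R A K]
    [IsFractionRing A K]
    (B : Subalgebra A K)
    {r s : ℕ} (p : A) (P : Fin r → A) (Q : Fin s → A)
    (hP : ∀ i, P i ∈ nonZeroDivisors A) (hQ : ∀ j, Q j ∈ nonZeroDivisors A)
    (hPB : ∀ i, ∃ x ∈ B, x * algebraMap A K (P i) = algebraMap A K p)
    (hQB : ∀ j, ∃ x ∈ B, x * algebraMap A K (Q j) = algebraMap A K p)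
    (hPQ : ∃ x ∈ B, x * algebraMap A K (∏ j, Q j) = algebraMap A K (∏ i, P i))
    (IΔ : Ideal (↥B ⊗[R] ↥B))
    (hIΔ : IΔ = Ideal.span {x : ↥B ⊗[R] ↥B |
        ∃ a : A, x = algebraMap A ↥B a ⊗ₜ[R] 1 - 1 ⊗ₜ[R] algebraMap A ↥B a}) :
    ∃ w : ↥B,
      (w : K) * algebraMap A K (∏ j, Q j) = algebraMap A K (p * ∏ i, P i) ∧
      ∃ n : ℕ, 1 ≤ n ∧ ∃ c : ℕ → (↥B ⊗[R] ↥B),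
        (∀ i, 1 ≤ i → i ≤ n → c i ∈ IΔ ^ i) ∧
        (w ⊗ₜ[R] 1 - 1 ⊗ₜ[R] w) ^ n +
            ∑ i ∈ Finset.Icc 1 n, c i * (w ⊗ₜ[R] 1 - 1 ⊗ₜ[R] w) ^ (n - i) = 0 :=
  campillo_criterion_general R A K B p P Q hQ hPB hQB hPQ IΔ hIΔ
end

section
/- Characterization of Newton polyhedra by support inequalities: Let σ ⊆ ℝ^d be the closed convex cone generated by a finite set of integer vectors, and assume σ has nonempty interior. Let I be a finite nonempty index set and let q and p_i (i ∈ I) be elements of ℤ^d. Then q ∈ N_σ(p_i | i ∈ I) if and only if for every v ∈ ℤ^d satisfying ⟨x,v⟩ ≥ 0 for all x ∈ σ one has ⟨q,v⟩ ≥ min_{i∈I} ⟨p_i,v⟩. -/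
open Finset

/-- The Newton polyhedron of a finite family of points with respect to a cone `σ`:
the convex hull of the union of the translates `p i + σ`. -/
noncomputable def newtonPolyhedron {d : ℕ} {ι : Type*} (σ : Set (Fin d → ℝ))
    (I : Finset ι) (p : ι → (Fin d → ℝ)) : Set (Fin d → ℝ) :=
  convexHull ℝ (⋃ i ∈ I, (fun z => p i + z) '' σ)

/-!
Each support inequality cuts out a half-space containing every translate `p i + σ`, hence the
whole Newton polyhedron. Conversely, homogenize: put the points `p i` at height one and the
generators `g j` of `σ` at height zero in `ℚ × ℚ^d`. If `(1, q)` lies in the cone they span,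
the coefficients exhibit `q` as a convex combination of the `p i` plus a point of `σ`.
Otherwise Farkas' lemma, proved over any ordered field by Fourier–Motzkin elimination, gives a
linear functional that is nonnegative on the generators and negative at `(1, q)`. Because we
work over `ℚ`, clearing denominators turns it into an integer vector `v`, nonnegative on `σ`,
with `⟨q, v⟩ < ⟨p i, v⟩` for every `i`, violating a support inequality.
-/

section Farkas

variable {F M ι : Type*} [Field F] [LinearOrder F] [IsStrictOrderedRing F]
  [AddCommGroup M] [Module F M]

lemma Module.exists_dual_apply_neg {b : M} (hb : b ≠ 0) : ∃ f : Module.Dual F M, f b < 0 := by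
  obtain ⟨f, hf⟩ : ∃ f : Module.Dual F M, f b ≠ 0 := by
    by_contra! h
    exact hb ((Module.forall_dual_apply_eq_zero_iff F b).mp h)
  exact ⟨-(f b)⁻¹ • f, by simp [hf]⟩

theorem PointedCone.mem_hull_image_or_exists_dual (A : Finset ι) (a : ι → M) (b : M) :
    b ∈ hull F (a '' A) ∨ ∃ f : Module.Dual F M, (∀ i ∈ A, 0 ≤ f (a i)) ∧ f b < 0 := by
  induction A using Finset.cons_induction generalizing a b with
  | empty =>
    by_cases hb : b = 0
    · simp [hb]
    · obtain ⟨f, hf⟩ := Module.exists_dual_apply_neg (F := F) hb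
      exact .inr ⟨f, by simp, hf⟩
  | cons i A hiA ih =>
    have hsub : hull F (a '' A) ≤ hull F (a '' (A.cons i hiA)) :=
      Submodule.span_mono (Set.image_mono (by simp))
    have hai : a i ∈ hull F (a '' (A.cons i hiA)) := subset_hull ⟨i, by simp, rfl⟩
    obtain hb | ⟨f, hf, hfb⟩ := ih a b
    · exact .inl (hsub hb)
    obtain hfi | hfi := le_or_gt 0 (f (a i))
    · exact .inr ⟨f, by simpa [hfi] using hf, hfb⟩
    -- Eliminate `a i`: project along it onto `ker f` and apply the induction hypothesis there.
    set π : M → M := fun x => x - (f x / f (a i)) • a i with hπ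
    obtain hπb | ⟨g, hg, hgb⟩ := ih (π ∘ a) (π b)
    · have hπa : hull F ((π ∘ a) '' A) ≤ hull F (a '' (A.cons i hiA)) := by
        refine Submodule.span_le.mpr ?_
        rintro _ ⟨j, hj, rfl⟩
        have hcoef : 0 ≤ -(f (a j) / f (a i)) :=
          neg_nonneg.mpr (div_nonpos_of_nonneg_of_nonpos (hf j hj) hfi.le)
        simpa [hπ, sub_eq_add_neg, ← neg_smul] using
          Submodule.add_mem _ (hsub (subset_hull ⟨j, hj, rfl⟩)) (smul_mem _ hcoef hai)
      have hb_eq : b = π b + (f b / f (a i)) • a i := by simp [hπ]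
      rw [hb_eq]
      exact .inl <| Submodule.add_mem _ (hπa hπb)
        (smul_mem _ (div_pos_of_neg_of_neg hfb hfi).le hai)
    · set f' : Module.Dual F M := g - (g (a i) / f (a i)) • f
      have hf' (x : M) : f' x = g (π x) := by
        simp only [f', hπ, LinearMap.sub_apply, LinearMap.smul_apply, smul_eq_mul, map_sub,
          map_smul]
        ring
      refine .inr ⟨f', fun j hj => ?_, by rw [hf']; exact hgb⟩
      rcases Finset.mem_cons.mp hj with rfl | hj
      · simp [f', hfi.ne]
      · rw [hf']; exact hg j hj

end Farkas

lemma exists_pos_mul_eq_intCast {κ : Type*} [Fintype κ] (w : κ → ℚ) :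
    ∃ m : ℚ, 0 < m ∧ ∃ v : κ → ℤ, ∀ k, (v k : ℚ) = m * w k := by
  refine ⟨∏ k, ((w k).den : ℚ), prod_pos fun k _ => by positivity, ?_⟩
  have h k : ∃ z : ℤ, (z : ℚ) = (∏ k, ((w k).den : ℚ)) * w k := by
    obtain ⟨e, he⟩ := dvd_prod_of_mem (fun k => (w k).den) (mem_univ k)
    refine ⟨(w k).num * e, ?_⟩
    rw [← Nat.cast_prod, he]
    push_cast
    rw [← Rat.mul_den_eq_num]
    ring
  choose v hv using h
  exact ⟨v, hv⟩

lemma Module.Dual.apply_prod_eq_mul_add_dotProduct {F : Type*} [Field F] {d : ℕ}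
    (f : Module.Dual F (F × (Fin d → F))) (t : F) (x : Fin d → F) :
    f (t, x) =
      t * f (1, 0) + (dotProductEquiv F (Fin d)).symm (f ∘ₗ LinearMap.inr F F _) ⬝ᵥ x := by
  rw [← dotProductEquiv_apply_apply, LinearEquiv.apply_symm_apply]
  have hdecomp : (t, x) = t • ((1 : F), (0 : Fin d → F)) + (0, x) := by simp
  rw [hdecomp, map_add, map_smul, smul_eq_mul]
  rfl

section NewtonPolyhedron

variable {d : ℕ} {ι : Type*} {σ : Set (Fin d → ℝ)} {I : Finset ι} {p : ι → Fin d → ℝ}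

lemma exists_dotProduct_le_of_mem_newtonPolyhedron {w : Fin d → ℝ}
    (hw : ∀ z ∈ σ, 0 ≤ z ⬝ᵥ w) (hI : I.Nonempty) {x : Fin d → ℝ}
    (hx : x ∈ newtonPolyhedron σ I p) : ∃ i ∈ I, p i ⬝ᵥ w ≤ x ⬝ᵥ w := by
  rw [← inf'_le_iff hI]
  have hlin : IsLinearMap ℝ (· ⬝ᵥ w) :=
    ⟨fun x y => add_dotProduct x y w, fun c x => smul_dotProduct c x w⟩
  refine convexHull_min ?_ (convex_halfSpace_ge hlin _) hx
  simp only [Set.iUnion_subset_iff, Set.image_subset_iff]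
  intro i hi z hz
  simp only [Set.mem_preimage, Set.mem_ofPred_eq, add_dotProduct]
  linarith [inf'_le (fun i => p i ⬝ᵥ w) hi, hw z hz]

lemma sum_smul_add_mem_newtonPolyhedron {c : ι → ℝ} (hc₀ : ∀ i ∈ I, 0 ≤ c i)
    (hc₁ : ∑ i ∈ I, c i = 1) {z : Fin d → ℝ} (hz : z ∈ σ) :
    ∑ i ∈ I, c i • p i + z ∈ newtonPolyhedron σ I p := by
  have hsum : ∑ i ∈ I, c i • p i + z = ∑ i ∈ I, c i • (p i + z) := by
    simp [smul_add, sum_add_distrib, ← sum_smul, hc₁]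
  rw [hsum]
  exact (convex_convexHull ℝ _).sum_mem hc₀ hc₁ fun i hi =>
    subset_convexHull ℝ _ (Set.mem_biUnion hi ⟨z, hz, rfl⟩)

end NewtonPolyhedron

section Homogenization

variable {d : ℕ} {ι κ : Type*} [Fintype κ] {σ : Set (Fin d → ℝ)} {I : Finset ι}
  {p : ι → Fin d → ℤ} {g : κ → Fin d → ℤ} {q : Fin d → ℤ}

def homogenize (p : ι → Fin d → ℤ) (g : κ → Fin d → ℤ) : ι ⊕ κ → ℚ × (Fin d → ℚ) :=
  Sum.elim (fun i => (1, Int.cast ∘ p i)) (fun j => (0, Int.cast ∘ g j))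

lemma mem_newtonPolyhedron_of_mem_hull_homogenize
    (hσ : σ = {x : Fin d → ℝ | ∃ c : κ → ℝ,
        (∀ j, 0 ≤ c j) ∧ x = ∑ j, c j • (fun k => (g j k : ℝ))})
    (hq : (1, Int.cast ∘ q) ∈
      PointedCone.hull ℚ (homogenize p g '' (I.disjSum univ : Finset (ι ⊕ κ)))) :
    (fun k => (q k : ℝ)) ∈ newtonPolyhedron σ I (fun i k => (p i k : ℝ)) := by
  obtain ⟨c, hc⟩ := (Submodule.mem_span_image_finset_iff_exists_fun' _).mp hq
  simp only [sum_disjSum, homogenize, Sum.elim_inl, Sum.elim_inr, Prod.ext_iff, Prod.fst_add,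
    Prod.snd_add, Prod.fst_sum, Prod.snd_sum, Prod.smul_fst, Prod.smul_snd, ← Nonneg.coe_smul,
    smul_eq_mul, mul_one, mul_zero, sum_const_zero, add_zero] at hc
  obtain ⟨hsum, hsnd⟩ := hc
  have hz : (∑ j, ((c (.inr j) : ℚ) : ℝ) • fun k => (g j k : ℝ)) ∈ σ :=
    hσ ▸ ⟨_, fun j => by simp [(c _).2], rfl⟩
  convert sum_smul_add_mem_newtonPolyhedron (c := fun i => ((c (.inl i) : ℚ) : ℝ))
    (fun i _ => by simp [(c _).2]) (by exact_mod_cast hsum) hz using 1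
  funext k
  have hk := congrFun hsnd k
  simp only [Nonneg.coe_smul, Pi.add_apply, Finset.sum_apply, Pi.smul_apply, Function.comp_apply,
    smul_eq_mul] at hk ⊢
  exact_mod_cast hk.symm

lemma exists_int_separating_of_dual
    (hσ : σ = {x : Fin d → ℝ | ∃ c : κ → ℝ,
        (∀ j, 0 ≤ c j) ∧ x = ∑ j, c j • (fun k => (g j k : ℝ))})
    {f : Module.Dual ℚ (ℚ × (Fin d → ℚ))}
    (hf : ∀ a ∈ I.disjSum univ, 0 ≤ f (homogenize p g a)) (hfq : f (1, Int.cast ∘ q) < 0) :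
    ∃ v : Fin d → ℤ, (∀ x ∈ σ, 0 ≤ x ⬝ᵥ (Int.cast ∘ v)) ∧ ∀ i ∈ I, q ⬝ᵥ v < p i ⬝ᵥ v := by
  obtain ⟨m, hm, v, hv⟩ := exists_pos_mul_eq_intCast
    ((dotProductEquiv ℚ (Fin d)).symm (f ∘ₗ LinearMap.inr ℚ ℚ _))
  have hfv (t : ℚ) (u : Fin d → ℤ) :
      m * f (t, Int.cast ∘ u) = m * t * f (1, 0) + (u ⬝ᵥ v : ℤ) := by
    rw [Module.Dual.apply_prod_eq_mul_add_dotProduct, mul_add, ← mul_assoc, dotProduct,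
      dotProduct, mul_sum]
    push_cast
    simp only [hv, Function.comp_apply]
    congr 1
    exact sum_congr rfl fun k _ => by ring
  refine ⟨v, ?_, fun i hi => ?_⟩
  · have hg (j : κ) : (0 : ℝ) ≤ (g j ⬝ᵥ v : ℤ) := by
      have hfj := hf (.inr j) (by simp)
      simp only [homogenize, Sum.elim_inr] at hfj
      exact_mod_cast (by nlinarith [hfv 0 (g j)] : (0 : ℚ) ≤ (g j ⬝ᵥ v : ℤ))
    rw [hσ]
    rintro _ ⟨c, hc, rfl⟩
    rw [sum_dotProduct]
    refine sum_nonneg fun j _ => ?_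
    rw [smul_dotProduct, smul_eq_mul]
    exact mul_nonneg (hc j) (by simpa [dotProduct] using hg j)
  · have hfi := hf (.inl i) (by simpa using hi)
    simp only [homogenize, Sum.elim_inl] at hfi
    exact_mod_cast
      (by nlinarith [hfv 1 q, hfv 1 (p i)] : ((q ⬝ᵥ v : ℤ) : ℚ) < (p i ⬝ᵥ v : ℤ))

end Homogenization

theorem mem_newtonPolyhedron_iff_support_inequalities_general
    {d N n : ℕ} (g : Fin N → (Fin d → ℤ))
    (σ : Set (Fin d → ℝ))
    (hσ : σ = {x : Fin d → ℝ | ∃ c : Fin N → ℝ,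
        (∀ j, 0 ≤ c j) ∧ x = ∑ j, c j • (fun k => (g j k : ℝ))})
    (I : Finset (Fin n)) (hI : I.Nonempty)
    (q : Fin d → ℤ) (p : Fin n → (Fin d → ℤ)) :
    (fun k => (q k : ℝ)) ∈
        newtonPolyhedron σ I (fun i => fun k => (p i k : ℝ)) ↔
      ∀ v : Fin d → ℤ,
        (∀ x ∈ σ, 0 ≤ ∑ k, x k * (v k : ℝ)) →
        I.inf' hI (fun i => ∑ k, p i k * v k) ≤ ∑ k, q k * v k := by
  constructor
  · intro hq v hv
    obtain ⟨i, hi, hle⟩ := exists_dotProduct_le_of_mem_newtonPolyhedron hv hI hq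
    simp only [dotProduct] at hle
    exact (inf'_le_iff hI).mpr ⟨i, hi, by exact_mod_cast hle⟩
  · intro h
    obtain hq | ⟨f, hf, hfq⟩ := PointedCone.mem_hull_image_or_exists_dual (F := ℚ)
      (I.disjSum univ) (homogenize p g) (1, Int.cast ∘ q)
    · exact mem_newtonPolyhedron_of_mem_hull_homogenize hσ hq
    · obtain ⟨v, hvσ, hvI⟩ := exists_int_separating_of_dual hσ hf hfq
      obtain ⟨i, hi, hle⟩ := (inf'_le_iff hI).mp (h v hvσ)
      exact absurd hle (hvI i hi).not_ge

/-- **Characterization of Newton polyhedra by support inequalities.**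
Let `σ ⊆ ℝ^d` be the convex cone generated by a finite set of integer vectors
`g 1, …, g N`, and assume `σ` has nonempty interior.  For integer points `q` and
`p i` (`i ∈ I`, `I` finite and nonempty), `q` lies in the Newton polyhedron
`N_σ(p i | i ∈ I)` if and only if for every integer vector `v` that is nonnegative
on `σ` one has `⟨q, v⟩ ≥ min_{i ∈ I} ⟨p i, v⟩`. -/
theorem mem_newtonPolyhedron_iff_support_inequalities
    {d N n : ℕ} (g : Fin N → (Fin d → ℤ))
    (σ : Set (Fin d → ℝ))
    (hσ : σ = {x : Fin d → ℝ | ∃ c : Fin N → ℝ,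
        (∀ j, 0 ≤ c j) ∧ x = ∑ j, c j • (fun k => (g j k : ℝ))})
    (hint : (interior σ).Nonempty)
    (I : Finset (Fin n)) (hI : I.Nonempty)
    (q : Fin d → ℤ) (p : Fin n → (Fin d → ℤ)) :
    (fun k => (q k : ℝ)) ∈
        newtonPolyhedron σ I (fun i => fun k => (p i k : ℝ)) ↔
      ∀ v : Fin d → ℤ,
        (∀ x ∈ σ, 0 ≤ ∑ k, x k * (v k : ℝ)) →
        I.inf' hI (fun i => ∑ k, p i k * v k) ≤ ∑ k, q k * v k :=
  mem_newtonPolyhedron_iff_support_inequalities_general g σ hσ I hI q p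
end

section
/- Lattice membership via binomial equations: Let p_1,…,p_n and q be elements of ℤ^d. Then q belongs to the subgroup ℤp_1 + ⋯ + ℤp_n of ℤ^d if and only if for all a, a' ∈ (ℂ^*)^d, the implication holds: if a^{p_i} = a'^{p_i} for every i ∈ {1,…,n}, then a^q = a'^q. -/
/-!
The map `m ↦ a ^ m` is a homomorphism `ℤ^d → ℂˣ`, and every homomorphism `χ : ℤ^d → ℂˣ` is of
this form with `a k = χ (e k)`. Two such homomorphisms that agree on the `p i` agree on the
subgroup `L` they generate. Conversely, if `q ∉ L`, some character `ℤ^d ⧸ L → ℚ/ℤ` is nonzero at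
`q`, and composing it with the injective `x ↦ exp (2πix)` gives `a` with `a ^ p i = 1` for all `i`
and `a ^ q ≠ 1`, so the implication fails for `a' = 1`.
-/

open Finset

section LaurentMonomial

variable {ι G : Type*} [Fintype ι] [CommGroup G]

def laurentMonomialHom (a : ι → G) : (ι → ℤ) →+ Additive G where
  toFun m := Additive.ofMul (∏ k, a k ^ m k)
  map_zero' := by simp
  map_add' m m' := by simp [zpow_add, prod_mul_distrib]

@[simp]
theorem toMul_laurentMonomialHom (a : ι → G) (m : ι → ℤ) :
    (laurentMonomialHom a m).toMul = ∏ k, a k ^ m k :=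
  rfl

theorem eq_laurentMonomialHom [DecidableEq ι] (χ : (ι → ℤ) →+ Additive G) :
    χ = laurentMonomialHom fun k => (χ (Pi.single k 1)).toMul := by
  refine AddMonoidHom.functions_ext _ _ _ fun i x => Additive.toMul.injective ?_
  rw [toMul_laurentMonomialHom, prod_eq_single i (fun k _ hk => by simp [hk]) (by simp),
    Pi.single_eq_same, ← toMul_zsmul, ← map_zsmul, ← Pi.single_smul', smul_eq_mul, mul_one]

end LaurentMonomial

noncomputable def AddCircle.ratToReal : AddCircle (1 : ℚ) →+ AddCircle (1 : ℝ) :=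
  QuotientAddGroup.map _ _ (Rat.castHom ℝ).toAddMonoidHom <| by
    rintro _ ⟨n, rfl⟩
    exact ⟨n, by simp⟩

theorem AddCircle.injective_ratToReal : Function.Injective AddCircle.ratToReal := by
  refine (injective_iff_map_eq_zero _).2 fun x hx => ?_
  induction x using QuotientAddGroup.induction_on with
  | H x =>
    obtain ⟨n, hn⟩ := (AddCircle.coe_eq_zero_iff (1 : ℝ)).1 hx
    exact (AddCircle.coe_eq_zero_iff 1).2 ⟨n, Rat.cast_injective (α := ℝ) (by simpa using hn)⟩

noncomputable def AddCircle.ratToUnits : AddCircle (1 : ℚ) →+ Additive ℂˣ :=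
  (MonoidHom.toAdditive Circle.toUnits).comp <|
    AddCircle.toCircle_addChar.toAddMonoidHom.comp AddCircle.ratToReal

theorem AddCircle.injective_ratToUnits : Function.Injective AddCircle.ratToUnits := by
  have : Function.Injective Circle.toUnits := fun z w h => Circle.ext (congrArg Units.val h)
  exact this.comp <| (AddCircle.injective_toCircle one_ne_zero).comp AddCircle.injective_ratToReal

theorem AddSubgroup.exists_complexUnits_le_ker_notMem_ker {A : Type*} [AddCommGroup A]
    {L : AddSubgroup A} {q : A} (hq : q ∉ L) :
    ∃ χ : A →+ Additive ℂˣ, L ≤ χ.ker ∧ q ∉ χ.ker := by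
  obtain ⟨c, hc⟩ := CharacterModule.exists_character_apply_ne_zero_of_ne_zero
    (mt (QuotientAddGroup.eq_zero_iff q).1 hq)
  refine ⟨AddCircle.ratToUnits.comp ((c : A ⧸ L →+ _).comp (QuotientAddGroup.mk' L)), ?_, ?_⟩
  · intro x hx
    change AddCircle.ratToUnits (c (x : A ⧸ L)) = 0
    rw [(QuotientAddGroup.eq_zero_iff x).2 hx, map_zero, map_zero]
  · rw [AddMonoidHom.mem_ker]
    exact (injective_iff_map_eq_zero _).1 AddCircle.injective_ratToUnits _ |>.mt hc

/-- **Lattice membership via binomial equations.**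
For `p 1, …, p n, q ∈ ℤ^d`, `q` belongs to the subgroup `ℤ p 1 + ⋯ + ℤ p n` of `ℤ^d`
if and only if for all `a, a' ∈ (ℂ*)^d`, whenever `a ^ (p i) = a' ^ (p i)` for every
`i`, also `a ^ q = a' ^ q`, where `a ^ p := ∏ k, (a k) ^ (p k)`. -/
theorem mem_lattice_iff_binomial_equations
    {d n : ℕ} (p : Fin n → (Fin d → ℤ)) (q : Fin d → ℤ) :
    q ∈ AddSubgroup.closure (Set.range p) ↔
      ∀ a a' : Fin d → ℂˣ,
        (∀ i : Fin n, (∏ k, a k ^ p i k) = ∏ k, a' k ^ p i k) →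
        (∏ k, a k ^ q k) = ∏ k, a' k ^ q k := by
  refine ⟨fun hq a a' h => ?_, fun H => ?_⟩
  · have hp : Set.EqOn (laurentMonomialHom a) (laurentMonomialHom a') (Set.range p) := by
      rintro _ ⟨i, rfl⟩
      exact congrArg Additive.ofMul (h i)
    exact congrArg Additive.toMul (AddMonoidHom.eqOn_closure hp hq)
  · by_contra hq
    obtain ⟨χ, hLχ, hqχ⟩ := AddSubgroup.exists_complexUnits_le_ker_notMem_ker hq
    rw [eq_laurentMonomialHom χ] at hLχ hqχ
    set a := fun k => (χ (Pi.single k 1)).toMul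
    refine hqχ (Additive.toMul.injective ?_)
    have hp i : (∏ k, a k ^ p i k) = ∏ k, (1 : Fin d → ℂˣ) k ^ p i k := by
      simpa using congrArg Additive.toMul (hLχ (AddSubgroup.subset_closure ⟨i, rfl⟩))
    simpa using H a 1 hp
end

section
/- Criterion for non-membership in the Lipschitz saturation (arc form): Let δ_1,…,δ_m ∈ ℤ^d, let σ ⊆ ℝ^d be the convex cone generated by δ_1,…,δ_m, and let π : ℕ^m → ℤ^d be given by π(p) = Σ_k p_k δ_k. Let p_1,…,p_n ∈ ℕ^m and q ∈ ℕ^m. Suppose there exists a subset I ⊆ {1,…,n} such that π(q) ∉ N_σ(π(p_i) | i ∈ I) and q does not belong to the subgroup of ℤ^m generated by {p_i | i ∉ I}. Then there exist v ∈ ℤ^d with ⟨δ_k, v⟩ ≥ 0 for all k, and a, a' ∈ (ℂ^*)^m, such that the power series φ_k := a_k · t^{⟨δ_k,v⟩} and φ'_k := a'_k · t^{⟨δ_k,v⟩} in ℂ⟦t⟧ satisfy ord(φ^q − (φ')^q) < min_{1≤i≤n} ord(φ^{p_i} − (φ')^{p_i}). (In the paper this witness, via the valuative criterion for integral closure, shows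 that the monomial x^{π(q)} does not belong to the Lipschitz saturation of the toric singularity with semigroup generated by the π(p_i).) -/
/-!
Since the data are integral, Farkas' lemma over `ℚ`, applied to the cone over the Newton
polyhedron, separates `π q` from it by a rational, hence after scaling an integral, vector `v`
with `⟨δ k, v⟩ ≥ 0`. Characters `ℤ^m / H → ℚ/ℤ ↪ ℂˣ` separate points, so there is a character
`χ` of `ℤ^m` trivial on the subgroup `H` generated by the `p i`, `i ∉ I`, but not at `q`.
With `a k = χ (e k)` and `a' = 1`, the difference `φ^w - φ'^w` is `(χ w - 1) t^⟨π w, v⟩`: its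
order is `∞` for `w = p i` with `i ∉ I`, at least `⟨π (p i), v⟩ > ⟨π q, v⟩` for `i ∈ I`, and
exactly `⟨π q, v⟩` for `w = q`.
-/

open Module Matrix PowerSeries

section Farkas

variable {𝕜 M : Type*} [Field 𝕜] [AddCommGroup M] [Module 𝕜 M]

namespace Module.Dual

def kerProjAlong (f : Dual 𝕜 M) (g : M) : M →ₗ[𝕜] M :=
  LinearMap.id - (f g)⁻¹ • f.smulRight g

lemma kerProjAlong_apply (f : Dual 𝕜 M) (g x : M) :
    f.kerProjAlong g x = x - (f x / f g) • g := by
  simp [kerProjAlong, div_eq_inv_mul, mul_smul]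

lemma kerProjAlong_self {f : Dual 𝕜 M} {g : M} (hg : f g ≠ 0) : f.kerProjAlong g g = 0 := by
  simp [kerProjAlong_apply, hg]

variable [LinearOrder 𝕜] [IsStrictOrderedRing 𝕜]

lemma nonneg_of_mem_hull {s : Set M} {f : Dual 𝕜 M} (hf : ∀ x ∈ s, 0 ≤ f x)
    {y : M} (hy : y ∈ PointedCone.hull 𝕜 s) : 0 ≤ f y := by
  have hfs : f ∈ PointedCone.dual (Dual.eval 𝕜 M) s := fun x hx => hf x hx
  rw [← PointedCone.dual_hull] at hfs
  exact hfs hy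

lemma mem_hull_insert_of_kerProjAlong_mem_hull {s : Set M} {f : Dual 𝕜 M} {g b : M}
    (hf : ∀ x ∈ s, 0 ≤ f x) (hg : f g < 0) (hb : f b < 0)
    (h : f.kerProjAlong g b ∈ PointedCone.hull 𝕜 (f.kerProjAlong g '' s)) :
    b ∈ PointedCone.hull 𝕜 (insert g s) := by
  rw [← LinearMap.coe_restrictScalars {c : 𝕜 // 0 ≤ c}] at h
  unfold PointedCone.hull at h
  rw [Submodule.span_image] at h
  obtain ⟨y, hy, hyb⟩ := h
  have hfy : 0 ≤ f y := nonneg_of_mem_hull hf hy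
  have hc : 0 ≤ (f b - f y) / f g := div_nonneg_of_nonpos (by linarith) hg.le
  have hb_eq : b = y + ((f b - f y) / f g) • g := by
    simp only [LinearMap.coe_restrictScalars, kerProjAlong_apply] at hyb
    linear_combination (norm := module) -hyb
  rw [hb_eq]
  exact add_mem (Submodule.span_mono (Set.subset_insert _ _) hy)
    (Submodule.smul_mem _ (⟨_, hc⟩ : {c : 𝕜 // 0 ≤ c}) (Submodule.subset_span (.inl rfl)))

end Module.Dual

variable [LinearOrder 𝕜] [IsStrictOrderedRing 𝕜]

/-- Farkas' lemma. -/
theorem PointedCone.mem_hull_range_or_exists_dual_neg {ι : Type*} [Finite ι]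
    (g : ι → M) (b : M) :
    b ∈ PointedCone.hull 𝕜 (Set.range g) ∨ ∃ f : Dual 𝕜 M, (∀ i, 0 ≤ f (g i)) ∧ f b < 0 := by
  revert g b
  refine Finite.induction_empty_option (P := fun ι => ∀ (g : ι → M) (b : M),
    b ∈ PointedCone.hull 𝕜 (Set.range g) ∨ ∃ f : Dual 𝕜 M, (∀ i, 0 ≤ f (g i)) ∧ f b < 0)
    ?_ ?_ ?_ ι
  · intro α β e h g b
    rcases h (g ∘ e) b with hb | ⟨f, hf, hfb⟩
    · exact .inl (by rwa [e.surjective.range_comp] at hb)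
    · exact .inr ⟨f, fun i => by simpa using hf (e.symm i), hfb⟩
  · intro g b
    by_cases hb : b = 0
    · exact .inl (hb ▸ zero_mem _)
    obtain ⟨f, hfb⟩ : ∃ f : Dual 𝕜 M, f b ≠ 0 := by
      by_contra! h
      exact hb ((forall_dual_apply_eq_zero_iff 𝕜 b).1 h)
    exact .inr ⟨-(f b)⁻¹ • f, fun i => i.elim, by simp [hfb]⟩
  · intro α _ IH g b
    rw [Option.range_eq]
    rcases IH (g ∘ some) b with hb | ⟨f, hf, hfb⟩
    · exact .inl (Submodule.span_mono (Set.subset_insert _ _) hb)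
    by_cases hf0 : 0 ≤ f (g none)
    · exact .inr ⟨f, Option.rec hf0 hf, hfb⟩
    push Not at hf0
    rcases IH (f.kerProjAlong (g none) ∘ g ∘ some) (f.kerProjAlong (g none) b) with
      hb | ⟨f', hf', hfb'⟩
    · rw [Set.range_comp] at hb
      exact .inl (Dual.mem_hull_insert_of_kerProjAlong_mem_hull
        (Set.forall_mem_range.2 hf) hf0 hfb hb)
    · exact .inr ⟨f'.comp (f.kerProjAlong (g none)),
        Option.rec (by simp [Dual.kerProjAlong_self hf0.ne]) hf', hfb'⟩

theorem exists_convexCombination_add_nonneg_combination_or_exists_dual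
    {ι κ : Type*} [Fintype ι] [Fintype κ] (x : ι → M) (δ : κ → M) (y : M) :
    (∃ c : ι → 𝕜, ∃ e : κ → 𝕜, (∀ i, 0 ≤ c i) ∧ ∑ i, c i = 1 ∧ (∀ k, 0 ≤ e k) ∧
        y = ∑ i, c i • x i + ∑ k, e k • δ k) ∨
      ∃ f : Dual 𝕜 M, (∀ k, 0 ≤ f (δ k)) ∧ ∀ i, f y < f (x i) := by
  rcases PointedCone.mem_hull_range_or_exists_dual_neg (𝕜 := 𝕜)
      (Sum.elim (fun i => (x i, (1 : 𝕜))) (fun k => (δ k, 0))) (y, 1) with hy | ⟨F, hF, hFy⟩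
  · obtain ⟨c, hc⟩ := (Submodule.mem_span_range_iff_exists_fun _).1 hy
    simp only [Fintype.sum_sum_type, Sum.elim_inl, Sum.elim_inr, Prod.ext_iff, Prod.fst_add,
      Prod.snd_add, Prod.fst_sum, Prod.snd_sum] at hc
    refine .inl ⟨fun i => c (.inl i), fun k => c (.inr k), fun i => (c _).2, ?_,
      fun k => (c _).2, ?_⟩
    · simpa [← Nonneg.coe_smul] using hc.2
    · simpa [← Nonneg.coe_smul] using hc.1.symm
  · have hF_apply (z : M) (s : 𝕜) : F (z, s) = F (z, 0) + s * F (0, 1) := by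
      rw [← smul_eq_mul, ← map_smul, ← map_add]
      simp
    refine .inr ⟨F ∘ₗ LinearMap.inl 𝕜 M 𝕜, fun k => hF (.inr k), fun i => ?_⟩
    have hx := hF (.inl i)
    simp only [Sum.elim_inl] at hx
    rw [hF_apply] at hx hFy
    simp only [LinearMap.comp_apply, LinearMap.inl_apply]
    linarith

lemma sum_smul_add_mem_convexHull_iUnion {ι : Type*} [Fintype ι] (x : ι → M) {σ : Set M}
    {c : ι → 𝕜} (hc₀ : ∀ i, 0 ≤ c i) (hc₁ : ∑ i, c i = 1) {s : M} (hs : s ∈ σ) :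
    ∑ i, c i • x i + s ∈ convexHull 𝕜 (⋃ i, (fun z => x i + z) '' σ) := by
  have h : ∑ i, c i • x i + s = ∑ i, c i • (x i + s) := by
    simp [smul_add, Finset.sum_add_distrib, ← Finset.sum_smul, hc₁]
  rw [h]
  exact (convex_convexHull 𝕜 _).sum_mem (fun i _ => hc₀ i) hc₁
    fun i _ => subset_convexHull 𝕜 _ (Set.mem_iUnion.2 ⟨i, s, hs, rfl⟩)

end Farkas

lemma exists_pos_smul_eq_intCast {η : Type*} [Fintype η] (w : η → ℚ) :
    ∃ N : ℚ, 0 < N ∧ ∃ v : η → ℤ, N • w = Int.cast ∘ v := by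
  classical
  refine ⟨∏ j, ((w j).den : ℚ), by positivity,
    fun j => (w j).num * ∏ j' ∈ Finset.univ.erase j, ((w j').den : ℤ), funext fun j => ?_⟩
  rw [Pi.smul_apply, smul_eq_mul, ← Finset.mul_prod_erase _ _ (Finset.mem_univ j),
    Function.comp_apply]
  push_cast
  rw [← Rat.mul_den_eq_num]
  ring

theorem exists_int_separating_of_notMem_convexHull {ι κ η : Type*} [Fintype κ] [Fintype η]
    (δ : κ → η → ℤ) (x : ι → η → ℤ) (y : η → ℤ) (I : Finset ι)
    (hy : (fun j => (y j : ℝ)) ∉ convexHull ℝ (⋃ i ∈ I, (fun z => (fun j => (x i j : ℝ)) + z) ''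
      {v | ∃ c : κ → ℝ, (∀ k, 0 ≤ c k) ∧ v = ∑ k, c k • fun j => (δ k j : ℝ)})) :
    ∃ v : η → ℤ, (∀ k, 0 ≤ δ k ⬝ᵥ v) ∧ ∀ i ∈ I, y ⬝ᵥ v < x i ⬝ᵥ v := by
  classical
  rcases exists_convexCombination_add_nonneg_combination_or_exists_dual (𝕜 := ℚ)
      (fun i : I => ((↑) : ℤ → ℚ) ∘ x i) (fun k => ((↑) : ℤ → ℚ) ∘ δ k) (((↑) : ℤ → ℚ) ∘ y) with
    ⟨c, e, hc₀, hc₁, he₀, hye⟩ | ⟨f, hfδ, hfx⟩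
  · refine absurd ?_ hy
    have hy_real : (fun j => (y j : ℝ)) = ∑ i : I, (c i : ℝ) • (fun j => (x i j : ℝ)) +
        ∑ k, (e k : ℝ) • fun j => (δ k j : ℝ) := by
      funext j
      simpa using congrArg (fun v => ((v j : ℚ) : ℝ)) hye
    rw [hy_real]
    refine convexHull_mono (Set.iUnion_subset fun i : I => Set.subset_biUnion_of_mem
      (u := fun i => (fun z => (fun j => (x i j : ℝ)) + z) '' _) i.2) ?_
    exact sum_smul_add_mem_convexHull_iUnion _ (fun i => by exact_mod_cast hc₀ i)
      (by exact_mod_cast hc₁) ⟨_, fun k => by exact_mod_cast he₀ k, rfl⟩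
  · obtain ⟨w, rfl⟩ := (dotProductEquiv ℚ η).surjective f
    simp only [dotProductEquiv_apply_apply] at hfδ hfx
    obtain ⟨N, hN, v, hv⟩ := exists_pos_smul_eq_intCast w
    have hcast (z : η → ℤ) : ((z ⬝ᵥ v : ℤ) : ℚ) = N * (w ⬝ᵥ ((↑) ∘ z)) := by
      rw [← smul_eq_mul, ← smul_dotProduct, hv, dotProduct_comm,
        ← eq_intCast (Int.castRingHom ℚ), RingHom.map_dotProduct]
      rfl
    refine ⟨v, fun k => ?_, fun i hi => ?_⟩
    · have h := hcast (δ k) ▸ mul_nonneg hN.le (hfδ k)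
      exact_mod_cast h
    · have h := mul_lt_mul_of_pos_left (hfx ⟨i, hi⟩) hN
      rw [← hcast, ← hcast] at h
      exact_mod_cast h

noncomputable def ratAddCircleToUnits : AddCircle (1 : ℚ) →+ Additive ℂˣ :=
  QuotientAddGroup.lift _
    ((MonoidHom.toAdditive Circle.toUnits).comp <| Circle.expHom.comp <|
      (AddMonoidHom.mulLeft (2 * Real.pi)).comp (Rat.castHom ℝ).toAddMonoidHom)
    (AddSubgroup.zmultiples_le.2 (by simp [Circle.exp_two_pi]))

lemma ratAddCircleToUnits_injective : Function.Injective ratAddCircleToUnits := by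
  refine (injective_iff_map_eq_zero _).2 fun x hx => ?_
  induction x using QuotientAddGroup.induction_on with | H r => ?_
  have h : Circle.exp (2 * Real.pi * r) = 1 := by
    simpa [ratAddCircleToUnits, Units.ext_iff, Circle.ext_iff] using hx
  obtain ⟨n, hn⟩ := Circle.exp_eq_one.1 h
  refine (AddCircle.coe_eq_zero_iff 1).2 ⟨n, ?_⟩
  have hr : (r : ℝ) = n := mul_left_cancel₀ Real.two_pi_pos.ne' (hn.trans (mul_comm _ _))
  simp only [zsmul_eq_mul, mul_one]
  exact_mod_cast hr.symm

lemma AddSubgroup.exists_hom_additive_units_ker_ge_ne_zero {A : Type*} [AddCommGroup A]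
    {H : AddSubgroup A} {a : A} (ha : a ∉ H) :
    ∃ χ : A →+ Additive ℂˣ, H ≤ χ.ker ∧ χ a ≠ 0 := by
  obtain ⟨c, hc⟩ := CharacterModule.exists_character_apply_ne_zero_of_ne_zero
    (a := (a : A ⧸ H)) (by rwa [Ne, QuotientAddGroup.eq_zero_iff])
  refine ⟨ratAddCircleToUnits.comp
      ((c : A ⧸ H →+ AddCircle (1 : ℚ)).comp (QuotientAddGroup.mk' H)), fun x hx => ?_,
    fun h => hc (ratAddCircleToUnits_injective (h.trans (map_zero _).symm))⟩
  change ratAddCircleToUnits (c (x : A ⧸ H)) = 0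
  rw [(QuotientAddGroup.eq_zero_iff x).2 hx, map_zero, map_zero]

lemma prod_toMul_single_pow {ι G : Type*} [Fintype ι] [DecidableEq ι] [CommGroup G]
    (χ : (ι → ℤ) →+ Additive G) (w : ι → ℕ) :
    ∏ k, Additive.toMul (χ (Pi.single k 1)) ^ w k = Additive.toMul (χ fun k => (w k : ℤ)) := by
  conv_rhs => rw [← Finset.univ_sum_single fun k => (w k : ℤ)]
  rw [map_sum, toMul_sum]
  refine Finset.prod_congr rfl fun k _ => ?_
  rw [← toMul_nsmul, ← map_nsmul, ← Pi.single_smul, nsmul_one]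

lemma PowerSeries.prod_C_mul_X_pow_pow {R ι : Type*} [CommSemiring R] (s : Finset ι)
    (a : ι → R) (e w : ι → ℕ) :
    ∏ k ∈ s, (C (a k) * X ^ e k) ^ w k = monomial (∑ k ∈ s, e k * w k) (∏ k ∈ s, a k ^ w k) := by
  simp [monomial_eq_C_mul_X_pow, mul_pow, ← pow_mul, Finset.prod_mul_distrib,
    Finset.prod_pow_eq_pow_sum]

lemma PowerSeries.order_monomial_sub_monomial {R : Type*} [Ring R] [DecidableEq R] (n : ℕ)
    (a b : R) :
    order (monomial n a - monomial n b) = if a = b then ⊤ else (n : ℕ∞) := by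
  rw [← map_sub, order_monomial]
  simp [sub_eq_zero]

lemma natCast_sum_toNat_dotProduct_mul {ι η : Type*} [Fintype ι] [Fintype η] (δ : ι → η → ℤ)
    (v : η → ℤ) (hv : ∀ k, 0 ≤ δ k ⬝ᵥ v) (w : ι → ℕ) :
    ((∑ k, (δ k ⬝ᵥ v).toNat * w k : ℕ) : ℤ) = (∑ k, (w k : ℤ) • δ k) ⬝ᵥ v := by
  push_cast
  simp only [sum_dotProduct, smul_dotProduct, smul_eq_mul, Int.toNat_of_nonneg (hv _), mul_comm]

lemma order_prod_pow_sub_prod_pow_eq_ite {ι : Type*} [Fintype ι] [DecidableEq ι]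
    (χ : (ι → ℤ) →+ Additive ℂˣ) (e : ι → ℕ) {φ φ' : ι → PowerSeries ℂ}
    (hφ : ∀ k, φ k = C ((Additive.toMul (χ (Pi.single k 1)) : ℂˣ) : ℂ) * X ^ e k)
    (hφ' : ∀ k, φ' k = X ^ e k) (w : ι → ℕ) :
    order (∏ k, φ k ^ w k - ∏ k, φ' k ^ w k) =
      if χ (fun k => (w k : ℤ)) = 0 then ⊤ else ((∑ k, e k * w k : ℕ) : ℕ∞) := by
  have hφ'C : ∀ k, φ' k = C 1 * X ^ e k := by simpa using hφ'
  rw [funext hφ, funext hφ'C, prod_C_mul_X_pow_pow, prod_C_mul_X_pow_pow,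
    order_monomial_sub_monomial]
  simp_rw [← Units.val_pow_eq_pow_val, ← Units.coe_prod, prod_toMul_single_pow]
  simp [Units.val_eq_one]

/-- **Criterion for non-membership in the Lipschitz saturation (arc form).**
Let `δ 1, …, δ m ∈ ℤ^d`, let `σ` be the convex cone they generate in `ℝ^d`, and let
`π : ℕ^m → ℤ^d`, `π p = ∑ k, p k • δ k`.  If there is a subset `I ⊆ {1,…,n}` with
`π q ∉ N_σ(π (p i) | i ∈ I)` and `q` not in the subgroup of `ℤ^m` generated by
`{p i | i ∉ I}`, then there are `v ∈ σ^∨ ∩ ℤ^d` and `a, a' ∈ (ℂ*)^m` such that the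
monomial arcs `φ k = a k • t ^ ⟨δ k, v⟩`, `φ' k = a' k • t ^ ⟨δ k, v⟩` satisfy
`ord(φ^q − (φ')^q) < min_i ord(φ^(p i) − (φ')^(p i))`. -/
theorem not_mem_lipschitz_saturation_criterion
    {d m n : ℕ} (δ : Fin m → (Fin d → ℤ))
    (π : (Fin m → ℕ) → (Fin d → ℤ))
    (hπ : ∀ p : Fin m → ℕ, π p = ∑ k, (p k : ℤ) • δ k)
    (σ : Set (Fin d → ℝ))
    (hσ : σ = {x : Fin d → ℝ | ∃ c : Fin m → ℝ,
        (∀ k, 0 ≤ c k) ∧ x = ∑ k, c k • (fun j => (δ k j : ℝ))})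
    (p : Fin n → (Fin m → ℕ)) (q : Fin m → ℕ)
    (I : Finset (Fin n))
    (hq1 : (fun j => (π q j : ℝ)) ∉
        convexHull ℝ (⋃ i ∈ I, (fun z => (fun j => (π (p i) j : ℝ)) + z) '' σ))
    (hq2 : (fun k => (q k : ℤ)) ∉
        AddSubgroup.closure {x : Fin m → ℤ | ∃ i ∉ I, x = fun k => (p i k : ℤ)}) :
    ∃ v : Fin d → ℤ, (∀ k : Fin m, 0 ≤ ∑ j, δ k j * v j) ∧
      ∃ a a' : Fin m → ℂˣ,
        ∀ φ φ' : Fin m → PowerSeries ℂ,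
          (∀ k, φ k = PowerSeries.C (a k : ℂ) *
              PowerSeries.X ^ (∑ j, δ k j * v j).toNat) →
          (∀ k, φ' k = PowerSeries.C (a' k : ℂ) *
              PowerSeries.X ^ (∑ j, δ k j * v j).toNat) →
          PowerSeries.order ((∏ k, φ k ^ q k) - ∏ k, φ' k ^ q k) <
            Finset.univ.inf (fun i : Fin n =>
              PowerSeries.order ((∏ k, φ k ^ p i k) - ∏ k, φ' k ^ p i k)) := by
  subst hσ
  obtain ⟨v, hvδ, hvI⟩ :=
    exists_int_separating_of_notMem_convexHull δ (fun i => π (p i)) (π q) I hq1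
  obtain ⟨χ, hχH, hχq⟩ := AddSubgroup.exists_hom_additive_units_ker_ge_ne_zero hq2
  refine ⟨v, hvδ, fun k => Additive.toMul (χ (Pi.single k 1)), 1, fun φ φ' hφ hφ' => ?_⟩
  have horder := order_prod_pow_sub_prod_pow_eq_ite χ (fun k => (δ k ⬝ᵥ v).toNat) hφ
    (fun k => by simpa [dotProduct] using hφ' k)
  rw [horder q, if_neg hχq, Finset.lt_inf_iff (ENat.natCast_lt_top _)]
  intro i _
  rw [horder (p i)]
  split_ifs with hχi
  · exact ENat.natCast_lt_top _
  have hi : i ∈ I := by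
    by_contra hi
    exact hχi (hχH (AddSubgroup.subset_closure ⟨i, hi, rfl⟩))
  have hlt := hvI i hi
  rw [hπ, hπ, ← natCast_sum_toNat_dotProduct_mul δ v hvδ,
    ← natCast_sum_toNat_dotProduct_mul δ v hvδ] at hlt
  exact_mod_cast hlt
end

section
/- Stratification of order jumps along an arc: Let v, v' ∈ ℕ^m, a, a' ∈ (ℂ^*)^m, and ψ_k, ψ'_k ∈ ℂ⟦t⟧ with zero constant term; set φ_k = a_k t^{v_k}(1+ψ_k), φ'_k = a'_k t^{v'_k}(1+ψ'_k), and for q ∈ ℕ^m write ⟨q,ṽ⟩ := min(⟨q,v⟩, ⟨q,v'⟩). Then there exist l ∈ ℕ, a strictly decreasing chain of ℝ-linear subspaces ℝ^m = V_0 ⊋ V_1 ⊋ ⋯ ⊋ V_l of ℝ^m, and a strictly increasing sequence of positive integers δ_0 < δ_1 < ⋯ < δ_{l−1}, such that for every q ∈ ℕ^m with ord(φ^q − (φ')^q) > ⟨q,ṽ⟩ the following hold (regarding q as a point of ℝ^m): (i) for each k ∈ {0,…,l−1}, ord(φ^q − (φ')^q) ≥ ⟨q,ṽ⟩ + δ_k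 if and only if q ∈ V_k; (ii) for each k ∈ {0,…,l−1}, ord(φ^q − (φ')^q) = ⟨q,ṽ⟩ + δ_k if and only if q ∈ V_k and q ∉ V_{k+1}; and (iii) ord(φ^q − (φ')^q) = ∞ if and only if q ∈ V_l. -/
/-!
Write `φ k = X ^ v k * w k` with `w k = C (a k) * (1 + ψ k)` a unit. If the order of
`φ^q - φ'^q` exceeds `min ⟨q, v⟩ ⟨q, v'⟩`, comparing the lowest coefficients forces
`⟨q, v⟩ = ⟨q, v'⟩` and `w^q (0) = w'^q (0)`. For units `f`, `g` with `f 0 = g 0`,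
`ord (f - g) = ord (f / g - 1) = ord ((f / g)') + 1` and `(f / g)' = (f / g) (f'/f - g'/g)`, so

  `ord (φ^q - φ'^q) = ⟨q, v⟩ + 1 + ord (L q)`,
  `L q = ∑ k, q k • (logDeriv (w k) - logDeriv (w' k))`,  `logDeriv f = f' / f`.

Since `L` is ℝ-linear in `q`, the sets `{x | d ≤ ord (L x)}` form a decreasing chain of
subspaces of `ℝ^m`, which stabilizes. The `V k` are its successive distinct members and
`δ k - 1` the indices `d` at which it drops.
-/

open PowerSeries Finset

theorem Antitone.exists_drop_indices {α : Type*} [PartialOrder α] [WellFoundedLT α]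
    {S : ℕ → α} (hS : Antitone S) :
    ∃ (l : ℕ) (j : ℕ → ℕ), S (j 0) = S 0 ∧
      (∀ k < l, S (j k + 1) = S (j (k + 1)) ∧ S (j (k + 1)) < S (j k)) ∧
      ∀ n, S (j l) ≤ S n := by
  obtain ⟨T, hT⟩ := WellFoundedLT.antitone_chain_condition hS
  induction T generalizing S with
  | zero => exact ⟨0, fun _ => 0, rfl, by simp, fun n => (hT n n.zero_le).le⟩
  | succ T ih =>
    obtain ⟨l, j, h0, hdrop, hlast⟩ :=
      ih (S := fun n => S (n + 1)) (fun a b h => hS (by omega)) (fun n hn => hT (n + 1) (by omega))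
    have hlast' : ∀ n, S (j l + 1) ≤ S n
      | 0 => (hlast 0).trans (hS (Nat.zero_le 1))
      | n + 1 => hlast n
    rcases (hS (Nat.zero_le 1)).eq_or_lt with h10 | h10
    · exact ⟨l, fun k => j k + 1, h0.trans h10, hdrop, hlast'⟩
    · refine ⟨l + 1, fun | 0 => 0 | k + 1 => j k + 1, rfl, ?_, hlast'⟩
      rintro (_ | k) hk
      · exact ⟨h0.symm, h0.trans_lt h10⟩
      · exact hdrop k (by omega)

theorem Finset.prod_pow_eq_pow_sum_mul_prod_pow {M ι : Type*} [CommMonoid M] (s : Finset ι)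
    {x : M} {f g : ι → M} {v : ι → ℕ} (q : ι → ℕ) (hf : ∀ i, f i = x ^ v i * g i) :
    ∏ i ∈ s, f i ^ q i = x ^ (∑ i ∈ s, q i * v i) * ∏ i ∈ s, g i ^ q i := by
  simp only [hf, mul_pow, prod_mul_distrib, ← pow_mul, prod_pow_eq_pow_sum, mul_comm (v _)]

namespace PowerSeries

theorem X_pow_dvd_iff_le_order {R : Type*} [Semiring R] {n : ℕ} {f : R⟦X⟧} :
    X ^ n ∣ f ↔ (n : ℕ∞) ≤ f.order :=
  X_pow_dvd_iff.trans
    ⟨nat_le_order f n, fun h i hi => coeff_of_lt_order i ((Nat.cast_lt.mpr hi).trans_le h)⟩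

theorem order_eq_zero_of_constantCoeff_ne_zero {R : Type*} [Semiring R] {f : R⟦X⟧}
    (hf : constantCoeff f ≠ 0) : f.order = 0 :=
  of_not_not fun h => hf (order_ne_zero_iff_constCoeff_eq_zero.mp h)

theorem eq_and_constantCoeff_eq_of_min_lt_order_sub {R : Type*} [Ring R] {M N : ℕ} {f g : R⟦X⟧}
    (hf : constantCoeff f ≠ 0) (hg : constantCoeff g ≠ 0)
    (h : min (M : ℕ∞) N < (X ^ M * f - X ^ N * g).order) :
    M = N ∧ constantCoeff f = constantCoeff g := by
  have hcoeff := coeff_of_lt_order (min M N) (by exact_mod_cast h)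
  rcases lt_trichotomy M N with hMN | rfl | hNM
  · simp [min_eq_left hMN.le, coeff_X_pow_mul', hMN.not_ge, hf] at hcoeff
  · simpa [coeff_X_pow_mul', sub_eq_zero] using hcoeff
  · simp [min_eq_right hNM.le, coeff_X_pow_mul', hNM.not_ge, hg] at hcoeff

theorem order_eq_order_derivative_add_one {R : Type*} [CommRing R] [IsDomain R] [CharZero R]
    {f : R⟦X⟧} (hf : constantCoeff f = 0) : f.order = (d⁄dX R f).order + 1 := by
  refine ENat.eq_of_forall_natCast_le_iff fun n => ?_
  cases n with
  | zero => simp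
  | succ n =>
    rw [← X_pow_dvd_iff_le_order, Nat.cast_succ, ENat.add_le_add_iff_right ENat.one_ne_top,
      ← X_pow_dvd_iff_le_order, X_pow_dvd_iff, X_pow_dvd_iff, Nat.forall_lt_succ_left]
    simp [coeff_derivative, hf, Nat.cast_add_one_ne_zero]

variable {K : Type*} [Field K]

noncomputable def logDeriv (f : K⟦X⟧) : K⟦X⟧ := d⁄dX K f * f⁻¹

theorem logDeriv_mul {f g : K⟦X⟧} (hf : constantCoeff f ≠ 0) (hg : constantCoeff g ≠ 0) :
    logDeriv (f * g) = logDeriv f + logDeriv g := by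
  simp only [logDeriv, Derivation.leibniz, smul_eq_mul, PowerSeries.mul_inv_rev]
  linear_combination (d⁄dX K g * g⁻¹) * PowerSeries.mul_inv_cancel f hf +
    (d⁄dX K f * f⁻¹) * PowerSeries.mul_inv_cancel g hg

theorem logDeriv_pow {f : K⟦X⟧} (hf : constantCoeff f ≠ 0) (n : ℕ) :
    logDeriv (f ^ n) = n • logDeriv f := by
  induction n with
  | zero => simp [logDeriv]
  | succ n ih =>
    rw [pow_succ, logDeriv_mul (by simpa using pow_ne_zero n hf) hf, ih, succ_nsmul]

theorem logDeriv_prod_pow {ι : Type*} (s : Finset ι) {f : ι → K⟦X⟧} (q : ι → ℕ)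
    (hf : ∀ i, constantCoeff (f i) ≠ 0) :
    logDeriv (∏ i ∈ s, f i ^ q i) = ∑ i ∈ s, q i • logDeriv (f i) := by
  induction s using Finset.cons_induction with
  | empty => simp [logDeriv]
  | cons i s hi ih =>
    rw [prod_cons, sum_cons, logDeriv_mul (by simpa using pow_ne_zero _ (hf i))
      (by simp [prod_ne_zero_iff, hf]), logDeriv_pow (hf i), ih]

theorem order_sub_eq_order_logDeriv_sub_add_one [CharZero K] {f g : K⟦X⟧} (hg : constantCoeff g ≠ 0)
    (hfg : constantCoeff f = constantCoeff g) :
    (f - g).order = (logDeriv f - logDeriv g).order + 1 := by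
  have hf : constantCoeff f ≠ 0 := hfg ▸ hg
  have hquot : constantCoeff (f * g⁻¹) ≠ 0 := by simp [hf, hg]
  have hsub : f - g = (f * g⁻¹ - 1) * g := by
    linear_combination -f * PowerSeries.inv_mul_cancel g hg
  have hderiv : d⁄dX K (f * g⁻¹ - 1) = f * g⁻¹ * (logDeriv f - logDeriv g) := by
    simp only [logDeriv, map_sub, Derivation.leibniz, derivative_inv', smul_eq_mul, derivative_one]
    linear_combination -(d⁄dX K f * g⁻¹) * PowerSeries.mul_inv_cancel f hf
  rw [hsub, order_mul, order_eq_zero_of_constantCoeff_ne_zero hg, add_zero,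
    order_eq_order_derivative_add_one (by simp [hfg, hg]), hderiv, order_mul,
    order_eq_zero_of_constantCoeff_ne_zero hquot, zero_add]

theorem order_X_pow_mul_sub_of_min_lt_order [CharZero K] {M N : ℕ} {f g : K⟦X⟧}
    (hf : constantCoeff f ≠ 0) (hg : constantCoeff g ≠ 0)
    (h : min (M : ℕ∞) N < (X ^ M * f - X ^ N * g).order) :
    M = N ∧ (X ^ M * f - X ^ N * g).order = (M + 1 : ℕ) + (logDeriv f - logDeriv g).order := by
  obtain ⟨rfl, hfg⟩ := eq_and_constantCoeff_eq_of_min_lt_order_sub hf hg h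
  refine ⟨rfl, ?_⟩
  rw [← mul_sub, order_mul, order_X_pow, order_sub_eq_order_logDeriv_sub_add_one hg hfg]
  push_cast
  ring

variable {R A M : Type*} [CommSemiring R] [CommSemiring A] [Algebra R A] [AddCommMonoid M]
  [Module R M]

noncomputable def orderFiltration (Φ : M →ₗ[R] A⟦X⟧) (d : ℕ) : Submodule R M :=
  ((Ideal.span {X ^ d}).restrictScalars R).comap Φ

theorem mem_orderFiltration {Φ : M →ₗ[R] A⟦X⟧} {d : ℕ} {x : M} :
    x ∈ orderFiltration Φ d ↔ (d : ℕ∞) ≤ (Φ x).order :=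
  Ideal.mem_span_singleton.trans X_pow_dvd_iff_le_order

@[simp]
theorem orderFiltration_zero (Φ : M →ₗ[R] A⟦X⟧) : orderFiltration Φ 0 = ⊤ :=
  eq_top_iff.mpr fun _ _ => mem_orderFiltration.mpr (by simp)

theorem antitone_orderFiltration (Φ : M →ₗ[R] A⟦X⟧) : Antitone (orderFiltration Φ) :=
  fun _ _ hde _ hx => mem_orderFiltration.mpr
    ((Nat.cast_le.mpr hde).trans (mem_orderFiltration.mp hx))

theorem exists_orderFiltration_strata [IsArtinian R M] (Φ : M →ₗ[R] A⟦X⟧) :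
    ∃ (l : ℕ) (j : ℕ → ℕ), orderFiltration Φ (j 0) = ⊤ ∧
      (∀ k < l, orderFiltration Φ (j (k + 1)) < orderFiltration Φ (j k)) ∧
      ∀ x, (∀ k < l, (Φ x).order = j k ↔
          x ∈ orderFiltration Φ (j k) ∧ x ∉ orderFiltration Φ (j (k + 1))) ∧
        ((Φ x).order = ⊤ ↔ x ∈ orderFiltration Φ (j l)) := by
  obtain ⟨l, j, h0, hdrop, hlast⟩ := (antitone_orderFiltration Φ).exists_drop_indices
  refine ⟨l, j, h0.trans (orderFiltration_zero Φ), fun k hk => (hdrop k hk).2,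
    fun x => ⟨fun k hk => ?_, ?_⟩⟩
  · rw [← (hdrop k hk).1, mem_orderFiltration, mem_orderFiltration, Nat.cast_succ,
      ENat.add_one_le_iff (ENat.natCast_ne_top _), not_lt, le_antisymm_iff, and_comm]
  · rw [ENat.eq_top_iff_forall_ge]
    exact ⟨fun h => mem_orderFiltration.mpr (h _), fun h d => mem_orderFiltration.mp (hlast d h)⟩

end PowerSeries

/-- **Stratification of order jumps along an arc.**
With arcs `φ k = a k • t ^ (v k) * (1 + ψ k)` and `φ' k = a' k • t ^ (v' k) * (1 + ψ' k)`,
there exist a strictly decreasing chain of linear subspaces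
`ℝ^m = V 0 ⊋ V 1 ⊋ ⋯ ⊋ V l` and a strictly increasing sequence of positive
integers `δ 0 < δ 1 < ⋯ < δ (l-1)` such that for every `q ∈ ℕ^m` whose order
jumps (i.e. `ord(φ^q − (φ')^q) > ⟨q, ṽ⟩ := min(⟨q,v⟩, ⟨q,v'⟩)`):
(i) `ord(φ^q − (φ')^q) ≥ ⟨q, ṽ⟩ + δ k` iff `q ∈ V k`, for `k < l`;
(ii) `ord(φ^q − (φ')^q) = ⟨q, ṽ⟩ + δ k` iff `q ∈ V k` and `q ∉ V (k+1)`, for `k < l`;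
(iii) `ord(φ^q − (φ')^q) = ∞` iff `q ∈ V l`. -/
theorem stratification_of_order_jumps
    {m : ℕ} (v v' : Fin m → ℕ) (a a' : Fin m → ℂˣ)
    (ψ ψ' : Fin m → PowerSeries ℂ)
    (hψ : ∀ k, PowerSeries.constantCoeff (ψ k) = 0)
    (hψ' : ∀ k, PowerSeries.constantCoeff (ψ' k) = 0)
    (φ φ' : Fin m → PowerSeries ℂ)
    (hφ : ∀ k, φ k = PowerSeries.C (a k : ℂ) * PowerSeries.X ^ v k * (1 + ψ k))
    (hφ' : ∀ k, φ' k = PowerSeries.C (a' k : ℂ) * PowerSeries.X ^ v' k * (1 + ψ' k)) :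
    ∃ (l : ℕ) (V : ℕ → Submodule ℝ (Fin m → ℝ)) (δ : ℕ → ℕ),
      V 0 = ⊤ ∧
      (∀ k < l, V (k + 1) < V k) ∧
      (∀ k < l, 0 < δ k) ∧
      (∀ k, k + 1 < l → δ k < δ (k + 1)) ∧
      ∀ q : Fin m → ℕ,
        ((min (∑ k, q k * v k) (∑ k, q k * v' k) : ℕ∞) <
            PowerSeries.order ((∏ k, φ k ^ q k) - ∏ k, φ' k ^ q k)) →
          ((∀ k < l,
              (((min (∑ j, q j * v j) (∑ j, q j * v' j) + δ k : ℕ) : ℕ∞) ≤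
                  PowerSeries.order ((∏ j, φ j ^ q j) - ∏ j, φ' j ^ q j) ↔
                (fun j => (q j : ℝ)) ∈ V k)) ∧
           (∀ k < l,
              (PowerSeries.order ((∏ j, φ j ^ q j) - ∏ j, φ' j ^ q j) =
                  ((min (∑ j, q j * v j) (∑ j, q j * v' j) + δ k : ℕ) : ℕ∞) ↔
                ((fun j => (q j : ℝ)) ∈ V k ∧ (fun j => (q j : ℝ)) ∉ V (k + 1)))) ∧
           (PowerSeries.order ((∏ j, φ j ^ q j) - ∏ j, φ' j ^ q j) = ⊤ ↔
              (fun j => (q j : ℝ)) ∈ V l)) := by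
  set w : Fin m → ℂ⟦X⟧ := fun k => C (a k : ℂ) * (1 + ψ k)
  set w' : Fin m → ℂ⟦X⟧ := fun k => C (a' k : ℂ) * (1 + ψ' k)
  have hw : ∀ k, constantCoeff (w k) ≠ 0 := by simp [w, hψ]
  have hw' : ∀ k, constantCoeff (w' k) ≠ 0 := by simp [w', hψ']
  have hW : ∀ q : Fin m → ℕ, constantCoeff (∏ k, w k ^ q k) ≠ 0 := by simp [prod_ne_zero_iff, hw]
  have hW' : ∀ q : Fin m → ℕ, constantCoeff (∏ k, w' k ^ q k) ≠ 0 := by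
    simp [prod_ne_zero_iff, hw']
  have hφw : ∀ k, φ k = X ^ v k * w k := fun k => by rw [hφ]; ring
  have hφw' : ∀ k, φ' k = X ^ v' k * w' k := fun k => by rw [hφ']; ring
  let Φ := Fintype.linearCombination ℝ fun k => logDeriv (w k) - logDeriv (w' k)
  have hΦ : ∀ q : Fin m → ℕ, Φ (fun k => (q k : ℝ)) =
      logDeriv (∏ k, w k ^ q k) - logDeriv (∏ k, w' k ^ q k) := fun q => by
    simp [Φ, Fintype.linearCombination_apply, Nat.cast_smul_eq_nsmul, smul_sub,
      logDeriv_prod_pow _ _ hw, logDeriv_prod_pow _ _ hw']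
  obtain ⟨l, j, h0, hdrop, hstrata⟩ := exists_orderFiltration_strata Φ
  refine ⟨l, fun k => orderFiltration Φ (j k), fun k => j k + 1, h0, hdrop,
    fun k _ => (j k).succ_pos, fun k hk => Nat.succ_lt_succ
      ((antitone_orderFiltration Φ).reflect_lt (hdrop k (by omega))), fun q hq => ?_⟩
  simp only [prod_pow_eq_pow_sum_mul_prod_pow _ q hφw,
    prod_pow_eq_pow_sum_mul_prod_pow _ q hφw'] at hq ⊢
  obtain ⟨hN, horder⟩ := order_X_pow_mul_sub_of_min_lt_order (hW q) (hW' q) (by exact_mod_cast hq)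
  obtain ⟨hexact, htop⟩ := hstrata fun k => (q k : ℝ)
  rw [horder, ← hΦ, ← hN, min_self]
  have hcast (k : ℕ) :
      ((∑ i, q i * v i + (j k + 1) : ℕ) : ℕ∞) = (∑ i, q i * v i + 1 : ℕ) + (j k : ℕ) := by
    push_cast; ring
  refine ⟨fun k _ => ?_, fun k hk => ?_, ?_⟩
  · rw [hcast k, ENat.add_le_add_iff_left (ENat.natCast_ne_top _), mem_orderFiltration]
  · rw [hcast k, (ENat.add_right_injective_of_ne_top (ENat.natCast_ne_top _)).eq_iff, hexact k hk]
  · rw [ENat.add_eq_top, or_iff_right (ENat.natCast_ne_top _), htop]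
end

section
/- Campillo's criterion implies the saturation condition (combinatorial corollary of the main theorem): Let p_1,…,p_n ∈ ℕ^d and let Γ ⊆ ℕ^d be the additive submonoid they generate. Let m, k_1,…,k_r, l_1,…,l_s ∈ Γ be such that m − k_a ∈ ℕ^d for all a, m − l_b ∈ ℕ^d for all b, and Σ_a k_a − Σ_b l_b ∈ ℕ^d. Set w := m + Σ_a k_a − Σ_b l_b ∈ ℕ^d. Then for every subset K ⊆ {1,…,n} such that w ∉ N(p_i | i ∈ K), the vector w belongs to the subgroup of ℤ^d generated by {p_i | i ∉ K}. (By the main theorem, this means w lies in the semigroup Γ^s of the Lipschitz saturation.) -/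
/-!
Every element `x` of a monoid generated by a set `s` in a canonically ordered monoid is a sum of
generators each lying below `x`.  Now `m`, all `k a` and all `l b` lie below `w` (because
`∑ l b ≤ ∑ k a`), while a generator `p i` with `i ∈ K` cannot lie below `w`, since then `w` would
be in `p i + ℝ≥0^d ⊆ N(p i | i ∈ K)`.  Hence `m`, `k a`, `l b` are sums of the `p i` with
`i ∉ K`, and `w`, an integer combination of them, lies in the subgroup these generate.
-/

theorem AddSubmonoid.mem_closure_inter_Iic {M : Type*} [AddCommMonoid M] [PartialOrder M]
    [CanonicallyOrderedAdd M] {s : Set M} {x : M} (hx : x ∈ closure s) :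
    x ∈ closure (s ∩ Set.Iic x) := by
  induction hx using closure_induction with
  | mem y hy => exact subset_closure ⟨hy, le_rfl⟩
  | zero => exact zero_mem _
  | add y z _ _ ihy ihz =>
    refine add_mem (closure_mono ?_ ihy) (closure_mono ?_ ihz) <;>
      exact Set.inter_subset_inter_right _ (Set.Iic_subset_Iic.mpr (by simp))

theorem natCast_mem_closure_of_forall_le {ι σ : Type*} (p : ι → σ → ℕ) (K : Set ι) (w : σ → ℤ)
    (hK : ∀ i ∈ K, ¬ ∀ j, (p i j : ℤ) ≤ w j) {x : σ → ℕ}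
    (hx : x ∈ AddSubmonoid.closure (Set.range p)) (hxw : ∀ j, (x j : ℤ) ≤ w j) :
    (fun j => (x j : ℤ)) ∈ AddSubgroup.closure {y | ∃ i ∉ K, y = fun j => (p i j : ℤ)} := by
  let cast : (σ → ℕ) →+ (σ → ℤ) := (Nat.castAddMonoidHom ℤ).compLeft σ
  have hmap : AddSubmonoid.closure (cast '' (Set.range p ∩ Set.Iic x)) ≤
      (AddSubgroup.closure {y | ∃ i ∉ K, y = fun j => (p i j : ℤ)}).toAddSubmonoid := by
    rw [AddSubmonoid.closure_le]
    rintro _ ⟨_, ⟨⟨i, rfl⟩, hix⟩, rfl⟩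
    have hiK : i ∉ K := fun hi => hK i hi fun j => (Nat.cast_le.mpr (hix j)).trans (hxw j)
    exact AddSubgroup.subset_closure ⟨i, hiK, rfl⟩
  apply hmap
  rw [← AddMonoidHom.map_mclosure]
  exact AddSubmonoid.mem_map_of_mem cast (AddSubmonoid.mem_closure_inter_Iic hx)

/-- **Campillo's criterion implies the saturation condition.**
Let `Γ ⊆ ℕ^d` be the submonoid generated by `p 1, …, p n`.  Let
`m, k 1, …, k r, l 1, …, l s ∈ Γ` with `m − k a ∈ ℕ^d`, `m − l b ∈ ℕ^d` and
`∑ a, k a − ∑ b, l b ∈ ℕ^d`.  Then `w := m + ∑ a, k a − ∑ b, l b` satisfies: for every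
`K ⊆ {1,…,n}` with `w ∉ N(p i | i ∈ K)`, `w` lies in the subgroup of `ℤ^d`
generated by `{p i | i ∉ K}`. -/
theorem campillo_criterion_implies_saturation_condition
    {d n r s : ℕ} (p : Fin n → (Fin d → ℕ))
    (Γ : AddSubmonoid (Fin d → ℕ)) (hΓ : Γ = AddSubmonoid.closure (Set.range p))
    (m : Fin d → ℕ) (k : Fin r → (Fin d → ℕ)) (l : Fin s → (Fin d → ℕ))
    (hm : m ∈ Γ) (hk : ∀ a, k a ∈ Γ) (hl : ∀ b, l b ∈ Γ)
    (hmk : ∀ a, ∀ j, k a j ≤ m j)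
    (hml : ∀ b, ∀ j, l b j ≤ m j)
    (hsum : ∀ j, (∑ b, l b j) ≤ ∑ a, k a j)
    (w : Fin d → ℤ)
    (hw : ∀ j, w j = (m j : ℤ) + (∑ a, (k a j : ℤ)) - ∑ b, (l b j : ℤ)) :
    ∀ K : Finset (Fin n),
      (fun j => (w j : ℝ)) ∉
          convexHull ℝ (⋃ i ∈ K, {x : Fin d → ℝ | ∀ j, (p i j : ℝ) ≤ x j}) →
      w ∈ AddSubgroup.closure {x : Fin d → ℤ | ∃ i ∉ K, x = fun j => (p i j : ℤ)} := by
  intro K hK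
  subst hΓ
  have hpK : ∀ i ∈ (K : Set (Fin n)), ¬ ∀ j, (p i j : ℤ) ≤ w j := fun i hi hle =>
    hK <| subset_convexHull ℝ _ <| Set.mem_biUnion hi fun j => by exact_mod_cast hle j
  have hmw : ∀ j, (m j : ℤ) ≤ w j := fun j => by
    have : ∑ b, (l b j : ℤ) ≤ ∑ a, (k a j : ℤ) := by exact_mod_cast hsum j
    linarith [hw j]
  have mem {x : Fin d → ℕ} (hx : x ∈ AddSubmonoid.closure (Set.range p)) (hxm : ∀ j, x j ≤ m j) :
      (fun j => (x j : ℤ)) ∈ AddSubgroup.closure {y | ∃ i ∉ K, y = fun j => (p i j : ℤ)} :=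
    natCast_mem_closure_of_forall_le p K w hpK hx fun j => (Nat.cast_le.mpr (hxm j)).trans (hmw j)
  have hw' : w = (fun j => (m j : ℤ)) + (∑ a, fun j => (k a j : ℤ)) - ∑ b, fun j => (l b j : ℤ) := by
    funext j
    simp only [Pi.sub_apply, Pi.add_apply, Finset.sum_apply, hw j]
  rw [hw']
  exact sub_mem (add_mem (mem hm fun _ => le_rfl) (sum_mem fun a _ => mem (hk a) (hmk a)))
    (sum_mem fun b _ => mem (hl b) (hml b))
end

section
/- Elements of m + Γ_m satisfy the saturation condition: Let p_1,…,p_n ∈ ℕ^d and let Γ ⊆ ℕ^d be the additive submonoid they generate. Let m ∈ Γ and define Γ_m := Z ∩ ℝ_{≥0}^d, where Z ⊆ ℤ^d is the subgroup generated by the set {γ ∈ Γ : m − γ ∈ ℝ_{≥0}^d}. Then for every γ ∈ Γ_m, the vector m + γ ∈ ℕ^d satisfies: for every subset K ⊆ {1,…,n} such that m + γ ∉ N(p_i | i ∈ K), the vector m + γ belongs to the subgroup of ℤ^d generated by {p_i | i ∉ K}. (By the main theorem, this means m + Γ_m is contained in the semigroup Γ^s of the Lipschitz saturation.) -/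
/-!
Every element of `Γ` lying below `b := m + γ` is a sum of generators `p i ≤ b`, and such a
generator cannot have `i ∈ K`, since then `b ∈ p i + ℝ≥0^d ⊆ N(p i | i ∈ K)`. Hence all these
elements lie in the subgroup generated by `{p i | i ∉ K}`. This applies to `m` itself and to the
generators of `Z`, which lie below `m ≤ b` because `γ ≥ 0`; so `m + γ` lies in that subgroup too.
-/

open Set

theorem AddSubmonoid.mem_closure_image_setOf_le_of_le {M ι : Type*} [AddCommMonoid M]
    [PartialOrder M] [CanonicallyOrderedAdd M] {p : ι → M} {x b : M}
    (hx : x ∈ AddSubmonoid.closure (range p)) (hxb : x ≤ b) :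
    x ∈ AddSubmonoid.closure (p '' {i | p i ≤ b}) := by
  induction hx using AddSubmonoid.closure_induction with
  | mem y hy => obtain ⟨i, rfl⟩ := hy; exact AddSubmonoid.subset_closure ⟨i, hxb, rfl⟩
  | zero => exact zero_mem _
  | add y z _ _ hy hz => exact add_mem (hy (le_self_add.trans hxb)) (hz (le_add_self.trans hxb))

theorem AddMonoidHom.map_mem_addSubgroupClosure {M A : Type*} [AddCommMonoid M] [AddGroup A]
    (f : M →+ A) {s : Set M} {x : M} (hx : x ∈ AddSubmonoid.closure s) :
    f x ∈ AddSubgroup.closure (f '' s) := by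
  apply AddSubgroup.le_closure_toAddSubmonoid
  rw [← AddMonoidHom.map_mclosure]
  exact AddSubmonoid.mem_map_of_mem f hx

theorem natCast_mem_closure_of_le_of_notMem_convexHull {ι κ : Type*} (p : ι → κ → ℕ)
    (K : Finset ι) {b x : κ → ℕ}
    (hb : (fun j => (b j : ℝ)) ∉ convexHull ℝ (⋃ i ∈ K, {y : κ → ℝ | ∀ j, (p i j : ℝ) ≤ y j}))
    (hx : x ∈ AddSubmonoid.closure (range p)) (hxb : x ≤ b) :
    (fun j => (x j : ℤ)) ∈ AddSubgroup.closure {y : κ → ℤ | ∃ i ∉ K, y = fun j => (p i j : ℤ)} := by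
  have hK : {i | p i ≤ b} ⊆ {i | i ∉ K} := fun i hib hiK =>
    hb <| subset_convexHull ℝ _ <| mem_biUnion hiK fun j => by exact_mod_cast hib j
  refine AddSubgroup.closure_mono ?_ <|
    ((Nat.castAddMonoidHom ℤ).compLeft κ).map_mem_addSubgroupClosure
      (AddSubmonoid.mem_closure_image_setOf_le_of_le hx hxb)
  rintro _ ⟨_, ⟨i, hi, rfl⟩, rfl⟩
  exact ⟨i, hK hi, rfl⟩

/-- **Elements of `m + Γ_m` satisfy the saturation condition.**
Let `Γ ⊆ ℕ^d` be the submonoid generated by `p 1, …, p n`, let `m ∈ Γ`, let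
`Z ⊆ ℤ^d` be the subgroup generated by `{γ ∈ Γ : m − γ ∈ ℝ_{≥0}^d}`, and let
`Γ_m := Z ∩ ℝ_{≥0}^d`.  Then for every `γ ∈ Γ_m`, the vector `m + γ` satisfies:
for every `K ⊆ {1,…,n}` with `m + γ ∉ N(p i | i ∈ K)`, the vector `m + γ` lies in
the subgroup of `ℤ^d` generated by `{p i | i ∉ K}`. -/
theorem mem_m_add_gamma_m_saturation_condition
    {d n : ℕ} (p : Fin n → (Fin d → ℕ))
    (Γ : AddSubmonoid (Fin d → ℕ)) (hΓ : Γ = AddSubmonoid.closure (Set.range p))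
    (m : Fin d → ℕ) (hm : m ∈ Γ)
    (Z : AddSubgroup (Fin d → ℤ))
    (hZ : Z = AddSubgroup.closure
        {x : Fin d → ℤ | ∃ γ ∈ Γ, (∀ j, γ j ≤ m j) ∧ x = fun j => (γ j : ℤ)})
    (γ : Fin d → ℤ) (hγZ : γ ∈ Z) (hγpos : ∀ j, 0 ≤ γ j) :
    ∀ K : Finset (Fin n),
      (fun j => ((m j : ℝ) + (γ j : ℝ))) ∉
          convexHull ℝ (⋃ i ∈ K, {x : Fin d → ℝ | ∀ j, (p i j : ℝ) ≤ x j}) →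
      (fun j => (m j : ℤ) + γ j) ∈
        AddSubgroup.closure {x : Fin d → ℤ | ∃ i ∉ K, x = fun j => (p i j : ℤ)} := by
  intro K hK
  subst hΓ hZ
  set b : Fin d → ℕ := fun j => m j + (γ j).toNat
  have hb : (fun j => (b j : ℝ)) = fun j => (m j : ℝ) + γ j := by
    ext j
    simp only [b, Nat.cast_add]
    rw [← Int.cast_natCast (γ j).toNat, Int.toNat_of_nonneg (hγpos j)]
  have hmb : m ≤ b := fun j => Nat.le_add_right _ _
  have key {x : Fin d → ℕ} (hx : x ∈ AddSubmonoid.closure (range p)) (hxb : x ≤ b) :=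
    natCast_mem_closure_of_le_of_notMem_convexHull p K (hb ▸ hK) hx hxb
  have hγ : γ ∈ AddSubgroup.closure {x : Fin d → ℤ | ∃ i ∉ K, x = fun j => (p i j : ℤ)} := by
    refine (AddSubgroup.closure_le _).mpr ?_ hγZ
    rintro _ ⟨γ', hγ', hγ'm, rfl⟩
    exact key hγ' (le_trans hγ'm hmb)
  exact add_mem (key hm hmb) hγ
end
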